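/- arXiv:2512.01722 — 4 statements merged into one kernel-verified Lean document; each statement's English description precedes it below -/
import Mathlib

section
/- In the general folded optimal transport setting, for every p ≥ 1 the folded Kantorovich semi-distance D̂_p extends d: for all x, y ∈ E one has D̂_p(x,y) = d(x,y). (In particular, for an extreme point x ∈ E the only representing probability of x is the Dirac mass δ_x.) -/
open MeasureTheory Set Filter Topology

noncomputable section

variable {X : Type*} [NormedAddCommGroup X] [NormedSpace ℝ X] [CompleteSpace X]
  [MeasurableSpace X] [BorelSpace X]

/-- The set of couplings between two Borel probability measures: probability measures on the
product whose first and second marginals are `μ` and `ν` respectively. -/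
def Couplings {Ω : Type*} [MeasurableSpace Ω] (μ ν : ProbabilityMeasure Ω) :
    Set (ProbabilityMeasure (Ω × Ω)) :=
  {π | (π : Measure (Ω × Ω)).map Prod.fst = (μ : Measure Ω) ∧
       (π : Measure (Ω × Ω)).map Prod.snd = (ν : Measure Ω)}

/-- The Wasserstein-`p` distance associated with the distance `d`. -/
def Wp {Ω : Type*} [MeasurableSpace Ω] (d : Ω → Ω → ℝ) (p : ℝ)
    (μ ν : ProbabilityMeasure Ω) : ℝ :=
  (sInf {r : ℝ | ∃ π ∈ Couplings μ ν,
    r = ∫ z, d z.1 z.2 ^ p ∂(π : Measure (Ω × Ω))}) ^ (1 / p)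

/-- The representing probabilities of `x`: Borel probability measures on `E` integrating every
continuous linear functional to its value at `x`. -/
def RepProb (E : Set X) (x : X) : Set (ProbabilityMeasure E) :=
  {μ | ∀ f : X →L[ℝ] ℝ, ∫ z, f (z : X) ∂(μ : Measure E) = f x}

/-- The representing couplings of `(x, y)`: Borel probability measures on `E × E` whose
marginals represent `x` and `y` respectively. -/
def RepCoupling (E : Set X) (x y : X) : Set (ProbabilityMeasure (E × E)) :=
  {π | ∀ f : X →L[ℝ] ℝ,
      (∫ z, f (z.1 : X) ∂(π : Measure (E × E)) = f x) ∧
      (∫ z, f (z.2 : X) ∂(π : Measure (E × E)) = f y)}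

/-- The folded Kantorovich semi-distance `D̂_p`. -/
def hatD (E : Set X) (d : E → E → ℝ) (p : ℝ) (x y : X) : ℝ :=
  sInf {r : ℝ | ∃ μ ∈ RepProb E x, ∃ ν ∈ RepProb E y, r = Wp d p μ ν}

/-- The folded Wasserstein pseudo-distance `D_p`, obtained by chaining `D̂_p` through points
of `C`. -/
def foldD (C E : Set X) (d : E → E → ℝ) (p : ℝ) (x y : X) : ℝ :=
  sInf {r : ℝ | ∃ (N : ℕ) (z : ℕ → X), 1 ≤ N ∧ z 0 = x ∧ z N = y ∧ (∀ n ≤ N, z n ∈ C) ∧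
    r = ∑ n ∈ Finset.range N, hatD E d p (z n) (z (n + 1))}

section Aux

variable {Y : Type*} [NormedAddCommGroup Y] [NormedSpace ℝ Y]

lemma myIsCompact_convexJoin {s t : Set Y} (hs : IsCompact s) (ht : IsCompact t) :
    IsCompact (convexJoin ℝ s t) := by
  have h : convexJoin ℝ s t =
      (fun q : ℝ × Y × Y => (1 - q.1) • q.2.1 + q.1 • q.2.2) ''
        (Set.Icc (0:ℝ) 1 ×ˢ s ×ˢ t) := by
    ext x
    simp only [mem_convexJoin, Set.mem_image, Set.mem_prod, Prod.exists, segment_eq_image,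
      Set.mem_Icc]
    constructor
    · rintro ⟨a, ha, b, hb, ⟨θ, hθ, rfl⟩⟩
      exact ⟨θ, a, b, ⟨hθ, ha, hb⟩, rfl⟩
    · rintro ⟨θ, a, b, ⟨hθ, ha, hb⟩, rfl⟩
      exact ⟨a, ha, b, hb, θ, hθ, rfl⟩
  rw [h]
  exact (isCompact_Icc.prod (hs.prod ht)).image (by fun_prop)

lemma myIsCompact_convexHull_biUnion {ι : Type*} (t : Finset ι) (F : ι → Set Y)
    (hconv : ∀ i ∈ t, Convex ℝ (F i)) (hcp : ∀ i ∈ t, IsCompact (F i)) :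
    IsCompact (convexHull ℝ (⋃ i ∈ t, F i)) := by
  classical
  induction t using Finset.induction_on with
  | empty => simp
  | @insert a s ha ih =>
    have hFa : Convex ℝ (F a) := hconv a (Finset.mem_insert_self a s)
    have hFacp : IsCompact (F a) := hcp a (Finset.mem_insert_self a s)
    have ih' : IsCompact (convexHull ℝ (⋃ i ∈ s, F i)) :=
      ih (fun i hi => hconv i (Finset.mem_insert_of_mem hi))
        (fun i hi => hcp i (Finset.mem_insert_of_mem hi))
    rw [Finset.set_biUnion_insert]
    rcases (F a).eq_empty_or_nonempty with hFe | hFne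
    · rw [hFe, Set.empty_union]; exact ih'
    rcases (⋃ i ∈ s, F i).eq_empty_or_nonempty with hUe | hUne
    · rw [hUe, Set.union_empty, hFa.convexHull_eq]; exact hFacp
    rw [convexHull_union hFne hUne, hFa.convexHull_eq]
    exact myIsCompact_convexJoin hFacp ih'

/-- Milman's theorem. -/
lemma myMilman {K : Set Y} (hK : IsCompact K)
    (hT : IsCompact (closure (convexHull ℝ K))) :
    extremePoints ℝ (closure (convexHull ℝ K)) ⊆ K := by
  intro x hx
  rcases K.eq_empty_or_nonempty with rfl | hKne
  · simpa using extremePoints_subset hx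
  rw [← hK.isClosed.closure_eq, Metric.mem_closure_iff]
  intro ε hε
  obtain ⟨t, htK, htcov⟩ := hK.elim_nhds_subcover (fun k => Metric.ball k (ε/2))
    (fun k _ => Metric.ball_mem_nhds k (by linarith))
  set S : Y → Set Y := fun k => closure (convexHull ℝ (K ∩ Metric.closedBall k (ε/2))) with hS
  have hSsubT : ∀ k, S k ⊆ closure (convexHull ℝ K) :=
    fun k => closure_mono (convexHull_mono inter_subset_left)
  have hScp : ∀ k ∈ t, IsCompact (S k) := fun k _ =>
    hT.of_isClosed_subset isClosed_closure (hSsubT k)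
  have hSconv : ∀ k ∈ t, Convex ℝ (S k) := fun k _ => (convex_convexHull ℝ _).closure
  have hAcp : IsCompact (convexHull ℝ (⋃ k ∈ t, S k)) :=
    myIsCompact_convexHull_biUnion t S hSconv hScp
  have hKsub : K ⊆ ⋃ k ∈ t, S k := by
    intro y hy
    obtain ⟨k, hk, hky⟩ := Set.mem_iUnion₂.1 (htcov hy)
    exact Set.mem_biUnion hk
      (subset_closure (subset_convexHull ℝ _ ⟨hy, Metric.ball_subset_closedBall hky⟩))
  have hTA : closure (convexHull ℝ K) ⊆ convexHull ℝ (⋃ k ∈ t, S k) :=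
    closure_minimal (convexHull_mono hKsub) hAcp.isClosed
  have hAT : convexHull ℝ (⋃ k ∈ t, S k) ⊆ closure (convexHull ℝ K) :=
    convexHull_min (Set.iUnion₂_subset fun k _ => hSsubT k) ((convex_convexHull ℝ K).closure)
  have hxA : x ∈ convexHull ℝ (⋃ k ∈ t, S k) := hTA hx.1
  have hxext : x ∈ extremePoints ℝ (convexHull ℝ (⋃ k ∈ t, S k)) :=
    ⟨hxA, fun x₁ h₁ x₂ h₂ hseg => hx.2 (hAT h₁) (hAT h₂) hseg⟩
  obtain ⟨k, hk, hxk⟩ := Set.mem_iUnion₂.1 (extremePoints_convexHull_subset hxext)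
  have hxb : x ∈ Metric.closedBall k (ε/2) :=
    closure_minimal (convexHull_min inter_subset_right (convex_closedBall k (ε/2)))
      Metric.isClosed_closedBall hxk
  exact ⟨k, htK k hk, lt_of_le_of_lt (Metric.mem_closedBall.1 hxb) (by linarith)⟩

end Aux

lemma myIntegrable_val {E : Set X} (hEcp : IsCompact E) (ν : Measure E) [IsFiniteMeasure ν] :
    Integrable (fun z : E => (z : X)) ν := by
  have hsm : StronglyMeasurable (fun z : E => (z : X)) := by
    rw [stronglyMeasurable_iff_measurable_separable]
    refine ⟨measurable_subtype_coe, ?_⟩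
    have h : range (fun z : E => (z : X)) = E := Subtype.range_coe
    rw [h]; exact hEcp.isSeparable
  obtain ⟨B, hB⟩ := hEcp.isBounded.exists_norm_le
  exact ⟨hsm.aestronglyMeasurable,
    HasFiniteIntegral.of_bounded (C := B) (Eventually.of_forall (fun z => hB _ z.2))⟩

lemma myRepProb_eq_dirac {C E : Set X} (hCcp : IsCompact C) (hCcv : Convex ℝ C)
    (hE : E = extremePoints ℝ C) (hEcp : IsCompact E)
    (d : E → E → ℝ)
    (hd_self : ∀ a : E, d a a = 0)
    (hd_pos : ∀ a b : E, a ≠ b → 0 < d a b)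
    (hd_tri : ∀ a b c : E, d a c ≤ d a b + d b c)
    (hd_top : ∀ a : E, (𝓝 a).HasBasis (fun ε : ℝ => 0 < ε) (fun ε => {b : E | d a b < ε}))
    (a : E) (μ : ProbabilityMeasure E) (hμ : μ ∈ RepProb E (a : X)) :
    (μ : Measure E) = Measure.dirac a := by
  haveI : CompactSpace E := isCompact_iff_compactSpace.mp hEcp
  set m : Measure E := (μ : Measure E) with hm
  haveI : IsProbabilityMeasure m := μ.2
  have hEsubC : E ⊆ C := by rw [hE]; exact extremePoints_subset
  have hba : ∫ z, (z : X) ∂m = (a : X) := by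
    rw [NormedSpace.eq_iff_forall_dual_eq ℝ]
    intro g
    exact (ContinuousLinearMap.integral_comp_comm g (myIntegrable_val hEcp m)).symm.trans (hμ g)
  suffices hone : m {a} = 1 by
    ext s hs
    rw [Measure.dirac_apply' a hs]
    by_cases has : a ∈ s
    · rw [Set.indicator_of_mem has]
      exact le_antisymm prob_le_one
        (le_trans hone.ge (measure_mono (singleton_subset_iff.2 has)))
    · rw [Set.indicator_of_notMem has]
      have hssub : s ⊆ {a}ᶜ := fun z hz hza => has (by
        rw [show z = a from hza] at hz; exact hz)
      have hcompl : m {a}ᶜ = 0 := by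
        rw [measure_compl (measurableSet_singleton a) (measure_ne_top m _), hone, measure_univ,
          tsub_self]
      exact le_antisymm (le_trans (measure_mono hssub) hcompl.le) zero_le
  by_contra hone
  have hcpos : m {a}ᶜ ≠ 0 := by
    intro h0
    apply hone
    have h := measure_add_measure_compl (μ := m) (measurableSet_singleton a)
    rw [h0, add_zero, measure_univ] at h; exact h
  have hsub : ({a}ᶜ : Set E) ⊆ ⋃ n : ℕ, {z : E | 1/((n:ℝ)+1) ≤ d a z} := by
    intro z hz
    have hz' : z ≠ a := by simpa using hz
    obtain ⟨n, hn⟩ := exists_nat_one_div_lt (hd_pos a z (Ne.symm hz'))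
    exact Set.mem_iUnion.2 ⟨n, hn.le⟩
  have hex : ∃ n : ℕ, m {z : E | 1/((n:ℝ)+1) ≤ d a z} ≠ 0 := by
    by_contra h
    push_neg at h
    exact hcpos (measure_mono_null hsub (measure_iUnion_null h))
  obtain ⟨n, hn0⟩ := hex
  set ε : ℝ := 1/((n:ℝ)+1) with hεdef
  have hε : 0 < ε := by positivity
  set K : Set E := {z : E | ε ≤ d a z} with hKdef
  have hKcl : IsClosed K := by
    rw [show K = {z : E | d a z < ε}ᶜ from by ext z; simp [hKdef, not_lt]]
    refine (isOpen_iff_mem_nhds.2 ?_).isClosed_compl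
    intro c hc
    have hc' : d a c < ε := hc
    have hmem : {b : E | d c b < ε - d a c} ∈ 𝓝 c := (hd_top c).mem_of_mem (by linarith)
    exact Filter.mem_of_superset hmem (fun z hz => by
      have h3 := hd_tri a c z
      simp only [Set.mem_setOf_eq] at hz ⊢
      linarith)
  have hKcp : IsCompact K := hKcl.isCompact
  have hKm : MeasurableSet K := hKcl.measurableSet
  have haK : a ∉ K := by
    intro h
    rw [hKdef, Set.mem_setOf_eq, hd_self] at h
    linarith
  set K' : Set X := Subtype.val '' K with hK'def
  have hK'cp : IsCompact K' := hKcp.image continuous_subtype_val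
  set T : Set X := closure (convexHull ℝ K') with hTdef
  have hTC : T ⊆ C := closure_minimal
    (convexHull_min (by rintro x ⟨z, hz, rfl⟩; exact hEsubC z.2) hCcv) hCcp.isClosed
  have hTcp : IsCompact T := hCcp.of_isClosed_subset isClosed_closure hTC
  have haC : (a : X) ∈ extremePoints ℝ C := by rw [← hE]; exact a.2
  have haT : (a : X) ∈ T := by
    by_cases hc : m Kᶜ = 0
    · have hae : ∀ᵐ z ∂m, z ∈ K := by
        rw [ae_iff]
        have h : {z : E | ¬ z ∈ K} = Kᶜ := rfl
        rw [h]; exact hc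
      have h := ((convex_convexHull ℝ K').closure).integral_mem isClosed_closure
        (hae.mono (fun z hz => subset_closure (subset_convexHull ℝ _ ⟨z, hz, rfl⟩)))
        (myIntegrable_val hEcp m)
      rwa [hba] at h
    · set t₁ := m K with ht₁def
      set t₂ := m Kᶜ with ht₂def
      have h12 : t₁ + t₂ = 1 := by
        rw [ht₁def, ht₂def, measure_add_measure_compl hKm, measure_univ]
      have ht₁top : t₁ ≠ ⊤ := measure_ne_top m K
      have ht₂top : t₂ ≠ ⊤ := measure_ne_top m Kᶜ
      set ν₁ : Measure E := t₁⁻¹ • m.restrict K with hν₁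
      set ν₂ : Measure E := t₂⁻¹ • m.restrict Kᶜ with hν₂
      haveI : IsProbabilityMeasure ν₁ := ⟨by
        rw [hν₁, Measure.smul_apply, Measure.restrict_apply_univ, smul_eq_mul,
          ENNReal.inv_mul_cancel hn0 ht₁top]⟩
      haveI : IsProbabilityMeasure ν₂ := ⟨by
        rw [hν₂, Measure.smul_apply, Measure.restrict_apply_univ, smul_eq_mul,
          ENNReal.inv_mul_cancel hc ht₂top]⟩
      set b₁ := ∫ z, (z : X) ∂ν₁ with hb₁def
      set b₂ := ∫ z, (z : X) ∂ν₂ with hb₂def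
      have hb₁T : b₁ ∈ T := ((convex_convexHull ℝ K').closure).integral_mem isClosed_closure
        ((Measure.ae_smul_measure (ae_restrict_mem hKm) _).mono
          (fun z hz => subset_closure (subset_convexHull ℝ _ ⟨z, hz, rfl⟩)))
        (((myIntegrable_val hEcp m).restrict).smul_measure (ENNReal.inv_ne_top.2 hn0))
      have hb₂C : b₂ ∈ C := hCcv.integral_mem hCcp.isClosed
        (Eventually.of_forall (fun z => hEsubC z.2))
        (((myIntegrable_val hEcp m).restrict).smul_measure (ENNReal.inv_ne_top.2 hc))
      have ht₁R : 0 < t₁.toReal := ENNReal.toReal_pos hn0 ht₁top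
      have ht₂R : 0 < t₂.toReal := ENNReal.toReal_pos hc ht₂top
      have hsum : t₁.toReal + t₂.toReal = 1 := by
        rw [← ENNReal.toReal_add ht₁top ht₂top, h12, ENNReal.toReal_one]
      have hsplit : (a : X) = t₁.toReal • b₁ + t₂.toReal • b₂ := by
        rw [← hba, ← integral_add_compl hKm (myIntegrable_val hEcp m)]
        congr 1
        · rw [hb₁def, hν₁, integral_smul_measure, smul_smul, ENNReal.toReal_inv,
            mul_inv_cancel₀ (ENNReal.toReal_ne_zero.2 ⟨hn0, ht₁top⟩), one_smul]
        · rw [hb₂def, hν₂, integral_smul_measure, smul_smul, ENNReal.toReal_inv,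
            mul_inv_cancel₀ (ENNReal.toReal_ne_zero.2 ⟨hc, ht₂top⟩), one_smul]
      have haseg : (a : X) ∈ openSegment ℝ b₁ b₂ :=
        ⟨t₁.toReal, t₂.toReal, ht₁R, ht₂R, hsum, hsplit.symm⟩
      have hb := haC.2 (hTC hb₁T) hb₂C haseg
      rw [← hb]; exact hb₁T
  have haext : (a : X) ∈ extremePoints ℝ T :=
    ⟨haT, fun x₁ h₁ x₂ h₂ hseg => haC.2 (hTC h₁) (hTC h₂) hseg⟩
  obtain ⟨z, hzK, hz⟩ := myMilman hK'cp (hTdef ▸ hTcp) haext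
  have hza : z = a := Subtype.coe_injective hz
  rw [hza] at hzK
  exact haK hzK

/-- For every `p ≥ 1` the folded Kantorovich semi-distance `D̂_p` extends `d`:
for all `x, y ∈ E`, `D̂_p(x,y) = d(x,y)`. (In particular, for an extreme point `x ∈ E` the only
representing probability of `x` is the Dirac mass `δ_x`.) -/
theorem foldedOT_hatD_extends
    (C E : Set X) (hCne : C.Nonempty) (hCcp : IsCompact C) (hCcv : Convex ℝ C)
    (hE : E = extremePoints ℝ C) (hEcp : IsCompact E)
    (d : E → E → ℝ)
    (hd_symm : ∀ a b : E, d a b = d b a)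
    (hd_self : ∀ a : E, d a a = 0)
    (hd_pos : ∀ a b : E, a ≠ b → 0 < d a b)
    (hd_tri : ∀ a b c : E, d a c ≤ d a b + d b c)
    (hd_top : ∀ a : E, (𝓝 a).HasBasis (fun ε : ℝ => 0 < ε) (fun ε => {b : E | d a b < ε}))
    (p : ℝ) (hp : 1 ≤ p) :
    (∀ a b : E, hatD E d p (a : X) (b : X) = d a b) ∧
    (∀ a : E, RepProb E (a : X) =
      {(⟨Measure.dirac a, inferInstance⟩ : ProbabilityMeasure E)}) := by
  have huniq : ∀ a : E, RepProb E (a : X) =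
      {(⟨Measure.dirac a, inferInstance⟩ : ProbabilityMeasure E)} := by
    intro a
    ext μ
    show μ ∈ RepProb E (a : X) ↔ μ = _
    constructor
    · intro hμ
      exact Subtype.ext
        (myRepProb_eq_dirac hCcp hCcv hE hEcp d hd_self hd_pos hd_tri hd_top a μ hμ)
    · rintro rfl
      intro f
      show ∫ z, f (z : X) ∂(Measure.dirac a) = f (a : X)
      rw [integral_dirac]
  refine ⟨?_, huniq⟩
  intro a b
  have hd_nonneg : 0 ≤ d a b := by
    have h := hd_tri a b a
    rw [hd_self, hd_symm b a] at h
    linarith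
  have hp0 : p ≠ 0 := by linarith
  have hW : Wp d p (⟨Measure.dirac a, inferInstance⟩ : ProbabilityMeasure E)
      (⟨Measure.dirac b, inferInstance⟩ : ProbabilityMeasure E) = d a b := by
    have hc : {r : ℝ | ∃ π ∈ Couplings (⟨Measure.dirac a, inferInstance⟩ : ProbabilityMeasure E)
          (⟨Measure.dirac b, inferInstance⟩ : ProbabilityMeasure E),
          r = ∫ z, d z.1 z.2 ^ p ∂(π : Measure (E × E))}
        = {d a b ^ p} := by
      ext r
      simp only [Set.mem_setOf_eq, Set.mem_singleton_iff]
      constructor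
      · rintro ⟨π, ⟨h1, h2⟩, rfl⟩
        haveI : IsProbabilityMeasure (π : Measure (E × E)) := π.2
        have hA : (π : Measure (E × E)) (Prod.fst ⁻¹' ({a}ᶜ : Set E)) = 0 := by
          rw [← Measure.map_apply measurable_fst (measurableSet_singleton a).compl, h1]
          show (Measure.dirac a) ({a}ᶜ : Set E) = 0
          rw [Measure.dirac_apply' _ (measurableSet_singleton a).compl]
          simp
        have hB : (π : Measure (E × E)) (Prod.snd ⁻¹' ({b}ᶜ : Set E)) = 0 := by
          rw [← Measure.map_apply measurable_snd (measurableSet_singleton b).compl, h2]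
          show (Measure.dirac b) ({b}ᶜ : Set E) = 0
          rw [Measure.dirac_apply' _ (measurableSet_singleton b).compl]
          simp
        have h1' : ∀ᵐ z ∂(π : Measure (E × E)), z.1 = a := by
          have hs1 : {z : E × E | ¬ z.1 = a} = Prod.fst ⁻¹' ({a}ᶜ : Set E) := by ext z; simp
          rw [ae_iff, hs1]; exact hA
        have h2' : ∀ᵐ z ∂(π : Measure (E × E)), z.2 = b := by
          have hs2 : {z : E × E | ¬ z.2 = b} = Prod.snd ⁻¹' ({b}ᶜ : Set E) := by ext z; simp
          rw [ae_iff, hs2]; exact hB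
        have hcongr : ∫ z, d z.1 z.2 ^ p ∂(π : Measure (E × E))
            = ∫ _z, d a b ^ p ∂(π : Measure (E × E)) :=
          integral_congr_ae ((h1'.and h2').mono (fun z hz => by simp only [hz.1, hz.2]))
        rw [hcongr, integral_const, probReal_univ, one_smul]
      · rintro rfl
        refine ⟨⟨Measure.dirac ((a, b) : E × E), inferInstance⟩, ⟨?_, ?_⟩, ?_⟩
        · show (Measure.dirac ((a, b) : E × E)).map Prod.fst = (Measure.dirac a : Measure E)
          rw [Measure.map_dirac' measurable_fst]
        · show (Measure.dirac ((a, b) : E × E)).map Prod.snd = (Measure.dirac b : Measure E)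
          rw [Measure.map_dirac' measurable_snd]
        · show d a b ^ p = ∫ z : E × E, d z.1 z.2 ^ p ∂(Measure.dirac ((a, b) : E × E))
          rw [integral_dirac]
    unfold Wp; rw [hc, csInf_singleton, ← Real.rpow_mul hd_nonneg, mul_one_div_cancel hp0,
      Real.rpow_one]
  have hset : {r : ℝ | ∃ μ ∈ RepProb E (a : X), ∃ ν ∈ RepProb E (b : X), r = Wp d p μ ν}
      = {Wp d p (⟨Measure.dirac a, inferInstance⟩ : ProbabilityMeasure E)
          (⟨Measure.dirac b, inferInstance⟩ : ProbabilityMeasure E)} := by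
    ext r
    rw [huniq a, huniq b]
    constructor
    · rintro ⟨μ, rfl, ν, rfl, h⟩; exact h
    · intro h; exact ⟨_, rfl, _, rfl, h⟩
  rw [hatD, hset, csInf_singleton, hW]
end
end

section
/- In the general folded optimal transport setting, for every p ≥ 1 and all x, y ∈ C, the folded Kantorovich semi-distance satisfies the linear-program formulation D̂_p(x,y)^p = inf_{π ∈ P_{(x,y)}} ∬_{E×E} d(z,z*)^p dπ(z,z*), where P_{(x,y)} is the set of representing couplings of (x,y). -/
open MeasureTheory Set Filter Topology

noncomputable section

variable {X : Type*} [NormedAddCommGroup X] [NormedSpace ℝ X] [CompleteSpace X]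
  [MeasurableSpace X] [BorelSpace X]

section Aux

variable {X : Type*} [NormedAddCommGroup X] [NormedSpace ℝ X] [CompleteSpace X]
  [MeasurableSpace X] [BorelSpace X]

lemma aux_coupling_mem_repCoupling {E : Set X} {x y : X}
    {μ ν : ProbabilityMeasure E} (hμ : μ ∈ RepProb E x) (hν : ν ∈ RepProb E y)
    {π : ProbabilityMeasure (E × E)} (hπ : π ∈ Couplings μ ν) :
    π ∈ RepCoupling E x y := by
  intro f
  have hf : AEStronglyMeasurable (fun z : E => f (z : X))
      ((π : Measure (E × E)).map Prod.fst) :=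
    (f.continuous.comp continuous_subtype_val).aestronglyMeasurable
  have hf2 : AEStronglyMeasurable (fun z : E => f (z : X))
      ((π : Measure (E × E)).map Prod.snd) :=
    (f.continuous.comp continuous_subtype_val).aestronglyMeasurable
  constructor
  · calc ∫ z, f (z.1 : X) ∂(π : Measure (E × E))
        = ∫ z, f (z : X) ∂((π : Measure (E × E)).map Prod.fst) :=
          (integral_map measurable_fst.aemeasurable hf).symm
      _ = f x := by rw [hπ.1]; exact hμ f
  · calc ∫ z, f (z.2 : X) ∂(π : Measure (E × E))
        = ∫ z, f (z : X) ∂((π : Measure (E × E)).map Prod.snd) :=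
          (integral_map measurable_snd.aemeasurable hf2).symm
      _ = f y := by rw [hπ.2]; exact hν f

lemma aux_repCoupling_marginals {E : Set X} {x y : X}
    {π : ProbabilityMeasure (E × E)} (hπ : π ∈ RepCoupling E x y) :
    ∃ μ ∈ RepProb E x, ∃ ν ∈ RepProb E y, π ∈ Couplings μ ν := by
  refine ⟨π.map measurable_fst.aemeasurable, ?_, π.map measurable_snd.aemeasurable, ?_,
    ?_, ?_⟩
  · intro f
    have hf : AEStronglyMeasurable (fun z : E => f (z : X))
        ((π : Measure (E × E)).map Prod.fst) :=
      Continuous.aestronglyMeasurable (by fun_prop)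
    rw [ProbabilityMeasure.toMeasure_map, integral_map measurable_fst.aemeasurable hf]
    exact (hπ f).1
  · intro f
    have hf : AEStronglyMeasurable (fun z : E => f (z : X))
        ((π : Measure (E × E)).map Prod.snd) :=
      Continuous.aestronglyMeasurable (by fun_prop)
    rw [ProbabilityMeasure.toMeasure_map, integral_map measurable_snd.aemeasurable hf]
    exact (hπ f).2
  · rw [ProbabilityMeasure.toMeasure_map]
  · rw [ProbabilityMeasure.toMeasure_map]

lemma aux_prod_mem_couplings {Ω : Type*} [MeasurableSpace Ω] (μ ν : ProbabilityMeasure Ω) :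
    μ.prod ν ∈ Couplings μ ν := by
  constructor
  · have := ProbabilityMeasure.map_fst_prod μ ν
    have h2 := congrArg ProbabilityMeasure.toMeasure this
    rwa [ProbabilityMeasure.toMeasure_map] at h2
  · have := ProbabilityMeasure.map_snd_prod μ ν
    have h2 := congrArg ProbabilityMeasure.toMeasure this
    rwa [ProbabilityMeasure.toMeasure_map] at h2

end Aux

/-- Linear-program formulation: for every `p ≥ 1` and `x, y ∈ C`,
`D̂_p(x,y)^p = inf_{π ∈ P_(x,y)} ∬ d(z,z*)^p dπ(z,z*)` where `P_(x,y)` is the set of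
representing couplings of `(x,y)`. -/
theorem foldedOT_hatD_linear_program
    (C E : Set X) (hCne : C.Nonempty) (hCcp : IsCompact C) (hCcv : Convex ℝ C)
    (hE : E = extremePoints ℝ C) (hEcp : IsCompact E)
    (d : E → E → ℝ)
    (hd_symm : ∀ a b : E, d a b = d b a)
    (hd_self : ∀ a : E, d a a = 0)
    (hd_pos : ∀ a b : E, a ≠ b → 0 < d a b)
    (hd_tri : ∀ a b c : E, d a c ≤ d a b + d b c)
    (hd_top : ∀ a : E, (𝓝 a).HasBasis (fun ε : ℝ => 0 < ε) (fun ε => {b : E | d a b < ε}))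
    (p : ℝ) (hp : 1 ≤ p) :
    ∀ x ∈ C, ∀ y ∈ C,
      hatD E d p x y ^ p =
        sInf {r : ℝ | ∃ π ∈ RepCoupling E x y,
          r = ∫ z, d z.1 z.2 ^ p ∂(π : Measure (E × E))} := by
  intro x hx y hy
  have hp0 : (0:ℝ) < p := lt_of_lt_of_le one_pos hp
  have hd_nonneg : ∀ a b : E, 0 ≤ d a b := by
    intro a b
    rcases eq_or_ne a b with rfl | h
    · exact (hd_self a).ge
    · exact (hd_pos a b h).le
  set A : Set ℝ := {r : ℝ | ∃ π ∈ RepCoupling E x y,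
      r = ∫ z, d z.1 z.2 ^ p ∂(π : Measure (E × E))} with hAdef
  set B : Set ℝ := {r : ℝ | ∃ μ ∈ RepProb E x, ∃ ν ∈ RepProb E y, r = Wp d p μ ν} with hBdef
  have hatD_eq : hatD E d p x y = sInf B := rfl
  set S : ProbabilityMeasure ↥E → ProbabilityMeasure ↥E → Set ℝ :=
    fun μ ν => {r : ℝ | ∃ π ∈ Couplings μ ν,
      r = ∫ z, d z.1 z.2 ^ p ∂(π : Measure (E × E))} with hSdef
  have hWp : ∀ μ ν, Wp d p μ ν = (sInf (S μ ν)) ^ (1/p) := fun μ ν => rfl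
  have hAnonneg : ∀ r ∈ A, 0 ≤ r := by
    rintro r ⟨π, -, rfl⟩
    exact integral_nonneg fun z => Real.rpow_nonneg (hd_nonneg _ _) p
  have hAbdd : BddBelow A := ⟨0, hAnonneg⟩
  have hs0 : 0 ≤ sInf A := Real.sInf_nonneg hAnonneg
  have hSnn : ∀ μ ν, ∀ r ∈ S μ ν, 0 ≤ r := by
    rintro μ ν r ⟨π', -, rfl⟩
    exact integral_nonneg fun z => Real.rpow_nonneg (hd_nonneg _ _) p
  have hBbdd : BddBelow B := by
    refine ⟨0, ?_⟩
    rintro b ⟨μ, -, ν, -, rfl⟩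
    rw [hWp]
    exact Real.rpow_nonneg (Real.sInf_nonneg (hSnn μ ν)) _
  by_cases hne : (RepCoupling E x y).Nonempty
  · obtain ⟨π₀, hπ₀⟩ := hne
    have hAne : A.Nonempty := ⟨_, π₀, hπ₀, rfl⟩
    obtain ⟨μ₀, hμ₀, ν₀, hν₀, hπc₀⟩ := aux_repCoupling_marginals hπ₀
    have hBne : B.Nonempty := ⟨_, μ₀, hμ₀, ν₀, hν₀, rfl⟩
    have step1 : sInf A ^ (1/p) ≤ sInf B := by
      apply le_csInf hBne
      rintro b ⟨μ, hμ, ν, hν, rfl⟩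
      rw [hWp]
      have hsub : S μ ν ⊆ A := by
        rintro r ⟨π, hπ, rfl⟩
        exact ⟨π, aux_coupling_mem_repCoupling hμ hν hπ, rfl⟩
      have hSne : (S μ ν).Nonempty := ⟨_, μ.prod ν, aux_prod_mem_couplings μ ν, rfl⟩
      exact Real.rpow_le_rpow hs0 (csInf_le_csInf hAbdd hSne hsub) (by positivity)
    have step2 : sInf B ≤ sInf A ^ (1/p) := by
      by_contra hlt
      push_neg at hlt
      set ε := sInf B - sInf A ^ (1/p) with hε
      have hεpos : 0 < ε := sub_pos.mpr hlt
      have hcont : ContinuousAt (fun t : ℝ => t ^ (1/p)) (sInf A) :=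
        Real.continuousAt_rpow_const _ _ (Or.inr (by positivity))
      rw [Metric.continuousAt_iff] at hcont
      obtain ⟨δ, hδpos, hδ⟩ := hcont ε hεpos
      obtain ⟨a, haA, halt⟩ := exists_lt_of_csInf_lt hAne
        (lt_add_of_pos_right (sInf A) hδpos)
      have ha_ge : sInf A ≤ a := csInf_le hAbdd haA
      have hdist : dist a (sInf A) < δ := by
        rw [Real.dist_eq, abs_of_nonneg (sub_nonneg.mpr ha_ge)]
        linarith
      have h2 := hδ hdist
      rw [Real.dist_eq] at h2
      have hup : a ^ (1/p) < sInf A ^ (1/p) + ε := by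
        have h3 := (abs_lt.mp h2).2
        linarith
      obtain ⟨π, hπ, rfl⟩ := haA
      obtain ⟨μ, hμ, ν, hν, hπc⟩ := aux_repCoupling_marginals hπ
      have hWb : Wp d p μ ν ∈ B := ⟨μ, hμ, ν, hν, rfl⟩
      have hS_le : sInf (S μ ν) ≤ ∫ z, d z.1 z.2 ^ p ∂(π : Measure (E × E)) := by
        refine csInf_le ⟨0, hSnn μ ν⟩ ⟨π, hπc, rfl⟩
      have hchain : sInf B ≤ sInf A ^ (1/p) + ε := by
        calc sInf B ≤ Wp d p μ ν := csInf_le hBbdd hWb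
          _ = (sInf (S μ ν)) ^ (1/p) := hWp μ ν
          _ ≤ (∫ z, d z.1 z.2 ^ p ∂(π : Measure (E × E))) ^ (1/p) :=
              Real.rpow_le_rpow (Real.sInf_nonneg (hSnn μ ν)) hS_le (by positivity)
          _ ≤ sInf A ^ (1/p) + ε := hup.le
      rw [hε] at hchain
      have hcon : sInf B ≤ Wp d p μ ν := csInf_le hBbdd hWb
      have hstrict : Wp d p μ ν < sInf B := by
        calc Wp d p μ ν = (sInf (S μ ν)) ^ (1/p) := hWp μ ν
          _ ≤ (∫ z, d z.1 z.2 ^ p ∂(π : Measure (E × E))) ^ (1/p) :=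
              Real.rpow_le_rpow (Real.sInf_nonneg (hSnn μ ν)) hS_le (by positivity)
          _ < sInf A ^ (1/p) + ε := hup
          _ = sInf B := by rw [hε]; ring
      exact absurd hcon (not_le.mpr hstrict)
    have hBA : sInf B = sInf A ^ (1/p) := le_antisymm step2 step1
    rw [hatD_eq, hBA, ← Real.rpow_mul hs0, one_div_mul_cancel hp0.ne', Real.rpow_one]
  · have hAempty : A = ∅ := by
      rw [eq_empty_iff_forall_notMem]
      rintro r ⟨π, hπ, -⟩
      exact hne ⟨π, hπ⟩
    have hBempty : B = ∅ := by
      rw [eq_empty_iff_forall_notMem]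
      rintro r ⟨μ, hμ, ν, hν, -⟩
      exact hne ⟨μ.prod ν, aux_coupling_mem_repCoupling hμ hν (aux_prod_mem_couplings μ ν)⟩
    rw [hatD_eq, hBempty, hAempty, Real.sInf_empty, Real.zero_rpow hp0.ne']
end
end

section
/- In the general folded optimal transport setting, for every p ≥ 1 and all x, y ∈ C, the infimum defining D̂_p(x,y)^p over representing couplings is attained: there exists π* ∈ P_{(x,y)} such that D̂_p(x,y)^p = ∬_{E×E} d(z,z*)^p dπ*(z,z*). -/
open MeasureTheory Set Filter Topology BoundedContinuousFunction NNReal ENNReal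

namespace FoldedOT

variable {Ω : Type*} [MetricSpace Ω] [CompactSpace Ω]

/-- The Riesz content auxiliary function for functionals on bounded continuous functions. -/
noncomputable def rieszContentAux (Λ : (Ω →ᵇ ℝ≥0) →ₗ[ℝ≥0] ℝ≥0) :
    TopologicalSpace.Compacts Ω → ℝ≥0 := fun K =>
  sInf (Λ '' { f : Ω →ᵇ ℝ≥0 | ∀ x ∈ K, (1 : ℝ≥0) ≤ f x })

lemma rieszContentAux_image_nonempty (Λ : (Ω →ᵇ ℝ≥0) →ₗ[ℝ≥0] ℝ≥0)
    (K : TopologicalSpace.Compacts Ω) :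
    (Λ '' { f : Ω →ᵇ ℝ≥0 | ∀ x ∈ K, (1 : ℝ≥0) ≤ f x }).Nonempty :=
  ⟨Λ 1, 1, fun x _ => by simp, rfl⟩

lemma rieszContentAux_le (Λ : (Ω →ᵇ ℝ≥0) →ₗ[ℝ≥0] ℝ≥0) {K : TopologicalSpace.Compacts Ω}
    {f : Ω →ᵇ ℝ≥0} (h : ∀ x ∈ K, (1 : ℝ≥0) ≤ f x) :
    rieszContentAux Λ K ≤ Λ f :=
  csInf_le (OrderBot.bddBelow _) ⟨f, ⟨h, rfl⟩⟩

lemma rieszContentAux_mono (Λ : (Ω →ᵇ ℝ≥0) →ₗ[ℝ≥0] ℝ≥0) {K₁ K₂ : TopologicalSpace.Compacts Ω}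
    (h : K₁ ≤ K₂) : rieszContentAux Λ K₁ ≤ rieszContentAux Λ K₂ :=
  csInf_le_csInf (OrderBot.bddBelow _) (rieszContentAux_image_nonempty Λ K₂)
    (Set.image_mono fun f hf x hx => hf x (h hx))

lemma rieszContentAux_sup_le (Λ : (Ω →ᵇ ℝ≥0) →ₗ[ℝ≥0] ℝ≥0) (K1 K2 : TopologicalSpace.Compacts Ω) :
    rieszContentAux Λ (K1 ⊔ K2) ≤ rieszContentAux Λ K1 + rieszContentAux Λ K2 := by
  apply _root_.le_of_forall_pos_le_add
  intro ε εpos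
  obtain ⟨α1, ⟨⟨f1, hf1, rfl⟩, hα1⟩⟩ := exists_lt_of_csInf_lt (rieszContentAux_image_nonempty Λ K1)
    (lt_add_of_pos_right (rieszContentAux Λ K1) (half_pos εpos))
  obtain ⟨α2, ⟨⟨f2, hf2, rfl⟩, hα2⟩⟩ := exists_lt_of_csInf_lt (rieszContentAux_image_nonempty Λ K2)
    (lt_add_of_pos_right (rieszContentAux Λ K2) (half_pos εpos))
  have hu : ∀ x ∈ K1 ⊔ K2, (1 : ℝ≥0) ≤ (f1 + f2) x := by
    rintro x (x1 | x2)
    · exact le_add_right (hf1 x x1)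
    · exact le_add_left (hf2 x x2)
  refine (rieszContentAux_le Λ hu).trans ?_
  rw [map_add]
  have := add_lt_add hα1 hα2
  rw [add_add_add_comm, add_halves] at this
  exact this.le

/-- An `ℝ≥0`-linear functional on `ℝ≥0`-valued bounded continuous functions is monotone. -/
lemma lam_mono (Λ : (Ω →ᵇ ℝ≥0) →ₗ[ℝ≥0] ℝ≥0) {f g : Ω →ᵇ ℝ≥0} (h : ∀ x, f x ≤ g x) :
    Λ f ≤ Λ g := by
  let h0 : Ω →ᵇ ℝ≥0 := mkOfCompact ⟨fun x => g x - f x, g.continuous.sub f.continuous⟩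
  have hfg : f + h0 = g := by
    ext x
    have : f x + (g x - f x) = g x := add_tsub_cancel_of_le (h x)
    simpa [h0] using congrArg NNReal.toReal this
  calc Λ f ≤ Λ f + Λ h0 := le_self_add
  _ = Λ (f + h0) := (map_add _ _ _).symm
  _ = Λ g := by rw [hfg]

/-- The Riesz content associated to a positive linear functional on a compact metric space. -/
noncomputable def rieszC (Λ : (Ω →ᵇ ℝ≥0) →ₗ[ℝ≥0] ℝ≥0) : Content Ω where
  toFun := rieszContentAux Λ
  mono' K₁ K₂ h := rieszContentAux_mono Λ h
  sup_le' := rieszContentAux_sup_le Λ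
  sup_disjoint' := by
    intro K₁ K₂ hd _ _
    refine le_antisymm (rieszContentAux_sup_le Λ K₁ K₂) ?_
    refine le_csInf (rieszContentAux_image_nonempty Λ _) ?_
    rintro b ⟨f, hf, rfl⟩
    obtain ⟨r, hr2, hr1, hr01⟩ :=
      exists_continuous_zero_one_of_isCompact K₂.isCompact K₁.isCompact.isClosed hd.symm
    have hrc : Continuous fun x => (r x).toNNReal :=
      continuous_real_toNNReal.comp r.continuous
    have hr1' : ∀ x, (r x).toNNReal ≤ 1 := by
      intro x
      rw [show (1 : ℝ≥0) = Real.toNNReal 1 by simp]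
      exact Real.toNNReal_mono (hr01 x).2
    let g₁ : Ω →ᵇ ℝ≥0 := mkOfCompact ⟨fun x => f x * (r x).toNNReal,
      f.continuous.mul hrc⟩
    let g₂ : Ω →ᵇ ℝ≥0 := mkOfCompact ⟨fun x => f x * (1 - (r x).toNNReal),
      f.continuous.mul (continuous_const.sub hrc)⟩
    have hsum : g₁ + g₂ = f := by
      ext x
      have : f x * (r x).toNNReal + f x * (1 - (r x).toNNReal) = f x := by
        rw [← mul_add, add_tsub_cancel_of_le (hr1' x), mul_one]
      simpa [g₁, g₂] using congrArg NNReal.toReal this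
    have h₁ : rieszContentAux Λ K₁ ≤ Λ g₁ := by
      refine rieszContentAux_le Λ (fun x hx => ?_)
      have : r x = 1 := hr1 hx
      simp only [g₁, mkOfCompact_apply, ContinuousMap.coe_mk, this]
      simpa using hf x (Or.inl hx)
    have h₂ : rieszContentAux Λ K₂ ≤ Λ g₂ := by
      refine rieszContentAux_le Λ (fun x hx => ?_)
      have : r x = 0 := hr2 hx
      simp only [g₂, mkOfCompact_apply, ContinuousMap.coe_mk, this]
      simpa using hf x (Or.inr hx)
    calc rieszContentAux Λ K₁ + rieszContentAux Λ K₂ ≤ Λ g₁ + Λ g₂ := add_le_add h₁ h₂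
    _ = Λ (g₁ + g₂) := (map_add _ _ _).symm
    _ = Λ f := by rw [hsum]

variable [MeasurableSpace Ω] [BorelSpace Ω]

/-- The Riesz measure associated to a positive linear functional. -/
noncomputable def rieszM (Λ : (Ω →ᵇ ℝ≥0) →ₗ[ℝ≥0] ℝ≥0) : Measure Ω := (rieszC Λ).measure

lemma rieszM_univ_le (Λ : (Ω →ᵇ ℝ≥0) →ₗ[ℝ≥0] ℝ≥0) :
    rieszM Λ univ ≤ (Λ 1 : ℝ≥0∞) := by
  rw [rieszM, Content.measure_apply _ MeasurableSet.univ,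
    Content.outerMeasure_of_isOpen _ _ isOpen_univ]
  refine iSup₂_le fun K _ => ?_
  exact ENNReal.coe_le_coe.mpr (rieszContentAux_le Λ (fun x _ => le_refl _))

instance rieszM_finite (Λ : (Ω →ᵇ ℝ≥0) →ₗ[ℝ≥0] ℝ≥0) : IsFiniteMeasure (rieszM Λ) :=
  ⟨lt_of_le_of_lt (rieszM_univ_le Λ) ENNReal.coe_lt_top⟩

/-- Content value of a compact set vs measure. -/
lemma rieszC_le_rieszM (Λ : (Ω →ᵇ ℝ≥0) →ₗ[ℝ≥0] ℝ≥0) {K : Set Ω} (hK : IsClosed K) :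
    ((rieszC Λ) ⟨K, hK.isCompact⟩ : ℝ≥0∞) ≤ rieszM Λ K := by
  rw [rieszM, Content.measure_apply _ hK.measurableSet]
  exact (rieszC Λ).le_outerMeasure_compacts _

/-- Key estimate (a): if `f ≥ 1` on a closed set `K`, then `μ K ≤ Λ f`. -/
lemma rieszM_le (Λ : (Ω →ᵇ ℝ≥0) →ₗ[ℝ≥0] ℝ≥0) {K : Set Ω} (hK : IsClosed K)
    {f : Ω →ᵇ ℝ≥0} (hf : ∀ x ∈ K, 1 ≤ f x) : rieszM Λ K ≤ (Λ f : ℝ≥0∞) := by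
  refine ENNReal.le_of_forall_lt_one_mul_le fun a ha => ?_
  rcases eq_or_ne a 0 with rfl | ha0
  · simp
  lift a to ℝ≥0 using ha.ne_top
  have ha1 : a < 1 := by exact_mod_cast ha
  have ha0' : a ≠ 0 := by exact_mod_cast ha0
  set U : Set Ω := {x | a < f x} with hU
  have hUopen : IsOpen U := isOpen_lt continuous_const f.continuous
  have hKU : K ⊆ U := fun x hx => lt_of_lt_of_le ha1 (hf x hx)
  have hμU : rieszM Λ U ≤ ((a⁻¹ * Λ f : ℝ≥0) : ℝ≥0∞) := by
    rw [rieszM, Content.measure_apply _ hUopen.measurableSet,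
      Content.outerMeasure_of_isOpen _ _ hUopen]
    refine iSup₂_le fun K' hK' => ?_
    refine ENNReal.coe_le_coe.mpr ?_
    have : rieszContentAux Λ K' ≤ Λ (a⁻¹ • f) := by
      refine rieszContentAux_le Λ (fun x hx => ?_)
      have hax : a < f x := hK' hx
      have hev : (a⁻¹ • f) x = a⁻¹ * f x := rfl
      rw [hev]
      calc (1 : ℝ≥0) = a⁻¹ * a := (inv_mul_cancel₀ ha0').symm
      _ ≤ a⁻¹ * f x := mul_le_mul_right hax.le _
    rwa [LinearMap.map_smul, smul_eq_mul] at this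
  calc ↑a * rieszM Λ K ≤ ↑a * rieszM Λ U := by
        exact mul_le_mul_right (measure_mono hKU) _
  _ ≤ ↑a * ((a⁻¹ * Λ f : ℝ≥0) : ℝ≥0∞) := mul_le_mul_right hμU _
  _ = ((a * (a⁻¹ * Λ f) : ℝ≥0) : ℝ≥0∞) := by rw [← ENNReal.coe_mul]
  _ = (Λ f : ℝ≥0∞) := by rw [← mul_assoc, mul_inv_cancel₀ ha0', one_mul]


/-- Auxiliary: sum of truncated slices. -/
lemma sum_min_tsub (a δ : ℝ≥0) (n : ℕ) :
    ∑ i ∈ Finset.range n, min (a - (i : ℝ≥0) * δ) δ = min a ((n : ℝ≥0) * δ) := by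
  induction n with
  | zero => simp
  | succ m ih =>
    rw [Finset.sum_range_succ, ih]
    rcases le_total a ((m : ℝ≥0) * δ) with h | h
    · have h1 : a - (m : ℝ≥0) * δ = 0 := tsub_eq_zero_of_le h
      have h2 : a ≤ ((m + 1 : ℕ) : ℝ≥0) * δ := by
        refine h.trans ?_
        push_cast
        exact mul_le_mul_left (by simp) δ
      rw [h1, min_eq_left h, min_eq_left h2]
      simp
    · rw [min_eq_right h]
      rcases le_total (a - (m : ℝ≥0) * δ) δ with h2 | h2
      · rw [min_eq_left h2, add_tsub_cancel_of_le h]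
        have h3 : a ≤ ((m + 1 : ℕ) : ℝ≥0) * δ := by
          push_cast
          rw [add_mul, one_mul]
          exact tsub_le_iff_left.mp h2
        rw [min_eq_left h3]
      · rw [min_eq_right h2]
        have h3 : ((m + 1 : ℕ) : ℝ≥0) * δ ≤ a := by
          push_cast
          rw [add_mul, one_mul]
          exact (le_tsub_iff_left h).mp h2
        rw [min_eq_right h3]
        push_cast
        ring

/-- The truncated slice of a bounded continuous `ℝ≥0`-valued function. -/
noncomputable def piece (f : Ω →ᵇ ℝ≥0) (t δ : ℝ≥0) : Ω →ᵇ ℝ≥0 :=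
  mkOfCompact ⟨fun x => min (f x - t) δ,
    (f.continuous.sub continuous_const).min continuous_const⟩

lemma piece_apply (f : Ω →ᵇ ℝ≥0) (t δ : ℝ≥0) (x : Ω) :
    piece f t δ x = min (f x - t) δ := rfl

lemma isClosed_levelK (f : Ω →ᵇ ℝ≥0) (s : ℝ≥0) : IsClosed {x | s ≤ f x} :=
  isClosed_le continuous_const f.continuous

lemma isOpen_levelU (f : Ω →ᵇ ℝ≥0) (s : ℝ≥0) : IsOpen {x | s < f x} :=
  isOpen_lt continuous_const f.continuous

lemma piece_le_K (Λ : (Ω →ᵇ ℝ≥0) →ₗ[ℝ≥0] ℝ≥0) (f : Ω →ᵇ ℝ≥0) {δ : ℝ≥0} (hδ : 0 < δ)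
    (t : ℝ≥0) :
    (δ : ℝ≥0∞) * rieszM Λ {x | t + δ ≤ f x} ≤ (Λ (piece f t δ) : ℝ≥0∞) := by
  have hμ : rieszM Λ {x | t + δ ≤ f x} ≤ (Λ (δ⁻¹ • piece f t δ) : ℝ≥0∞) := by
    refine rieszM_le Λ (isClosed_levelK f (t + δ)) (fun x hx => ?_)
    have hx' : t + δ ≤ f x := hx
    have h1 : δ ≤ f x - t := le_tsub_of_add_le_left hx'
    have h2 : (δ⁻¹ • piece f t δ) x = δ⁻¹ * min (f x - t) δ := rfl
    rw [h2, min_eq_right h1, inv_mul_cancel₀ hδ.ne']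
  calc (δ : ℝ≥0∞) * rieszM Λ {x | t + δ ≤ f x}
      ≤ (δ : ℝ≥0∞) * (Λ (δ⁻¹ • piece f t δ) : ℝ≥0∞) := mul_le_mul_right hμ _
  _ = ((δ * (δ⁻¹ * Λ (piece f t δ)) : ℝ≥0) : ℝ≥0∞) := by
      rw [LinearMap.map_smul, smul_eq_mul, ← ENNReal.coe_mul]
  _ = (Λ (piece f t δ) : ℝ≥0∞) := by rw [← mul_assoc, mul_inv_cancel₀ hδ.ne', one_mul]

lemma piece_le_U (Λ : (Ω →ᵇ ℝ≥0) →ₗ[ℝ≥0] ℝ≥0) (f : Ω →ᵇ ℝ≥0) {δ : ℝ≥0} (hδ : 0 < δ)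
    (t : ℝ≥0) :
    (Λ (piece f t δ) : ℝ≥0∞) ≤ (δ : ℝ≥0∞) * rieszM Λ {x | t < f x} := by
  set p := piece f t δ with hp
  refine ENNReal.le_of_forall_pos_le_add fun ε hε hfin => ?_
  -- choose the slack parameter c
  set c : ℝ≥0 := min (1 / 2) (ε / (δ * Λ 1 + 1)) with hc
  have hc0 : 0 < c := by
    apply lt_min
    · norm_num
    · exact div_pos hε (by positivity)
  have hcε : c * (δ * Λ 1) ≤ ε := by
    calc c * (δ * Λ 1) ≤ ε / (δ * Λ 1 + 1) * (δ * Λ 1) :=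
          mul_le_mul_left (min_le_right _ _) _
    _ = ε * ((δ * Λ 1) / (δ * Λ 1 + 1)) := by
          rw [div_mul_eq_mul_div, mul_div_assoc]
    _ ≤ ε * 1 := by
          refine mul_le_mul_right ?_ ε
          refine (div_le_one (by positivity)).mpr ?_
          exact le_add_of_nonneg_right (zero_le')
    _ = ε := mul_one ε
  -- the compact set where the slice is at least c*δ
  set K' : Set Ω := {x | c * δ ≤ p x} with hK'
  have hK'cl : IsClosed K' := isClosed_le continuous_const p.continuous
  -- main content estimate
  have hcont : (Λ p : ℝ≥0) - c * δ * Λ 1 ≤ δ * rieszContentAux Λ ⟨K', hK'cl.isCompact⟩ := by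
    have h1 : ((Λ p : ℝ≥0) - c * δ * Λ 1) * δ⁻¹ ≤ rieszContentAux Λ ⟨K', hK'cl.isCompact⟩ := by
      refine le_csInf (rieszContentAux_image_nonempty Λ _) ?_
      rintro b ⟨h, hh, rfl⟩
      have key : Λ p ≤ δ * Λ h + c * δ * Λ 1 := by
        have hpt : ∀ x, p x ≤ (δ • h + (c * δ) • (1 : Ω →ᵇ ℝ≥0)) x := by
          intro x
          have hev : (δ • h + (c * δ) • (1 : Ω →ᵇ ℝ≥0)) x = δ * h x + c * δ := by
            simp [smul_eq_mul]
          rw [hev]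
          rcases le_or_gt (c * δ) (p x) with hx | hx
          · have hx' : (1 : ℝ≥0) ≤ h x := hh x hx
            have : p x ≤ δ := by rw [hp, piece_apply]; exact min_le_right _ _
            calc p x ≤ δ := this
            _ = δ * 1 := (mul_one δ).symm
            _ ≤ δ * h x := mul_le_mul_right hx' δ
            _ ≤ δ * h x + c * δ := le_self_add
          · calc p x ≤ c * δ := hx.le
            _ ≤ δ * h x + c * δ := le_add_self
        calc Λ p ≤ Λ (δ • h + (c * δ) • (1 : Ω →ᵇ ℝ≥0)) := lam_mono Λ hpt
        _ = δ * Λ h + c * δ * Λ 1 := by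
            rw [map_add, LinearMap.map_smul, LinearMap.map_smul, smul_eq_mul, smul_eq_mul]
      have h2 : (Λ p : ℝ≥0) - c * δ * Λ 1 ≤ δ * Λ h := tsub_le_iff_right.mpr key
      calc ((Λ p : ℝ≥0) - c * δ * Λ 1) * δ⁻¹ ≤ δ * Λ h * δ⁻¹ := mul_le_mul_left h2 _
      _ = Λ h := by rw [mul_comm δ (Λ h), mul_assoc, mul_inv_cancel₀ hδ.ne', mul_one]
    have hgen : ∀ A : ℝ≥0, A = δ * (A * δ⁻¹) := by
      intro A
      rw [mul_comm δ, mul_assoc, inv_mul_cancel₀ hδ.ne', mul_one]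
    calc (Λ p : ℝ≥0) - c * δ * Λ 1
        = δ * (((Λ p : ℝ≥0) - c * δ * Λ 1) * δ⁻¹) := hgen _
    _ ≤ δ * rieszContentAux Λ ⟨K', hK'cl.isCompact⟩ := mul_le_mul_right h1 δ
  have hKU : K' ⊆ {x | t < f x} := by
    intro x hx
    have hx' : c * δ ≤ min (f x - t) δ := hx
    have h1 : c * δ ≤ f x - t := hx'.trans (min_le_left _ _)
    have h2 : 0 < f x - t := lt_of_lt_of_le (by positivity) h1
    exact tsub_pos_iff_lt.mp h2
  have hμ : (rieszContentAux Λ ⟨K', hK'cl.isCompact⟩ : ℝ≥0∞) ≤ rieszM Λ {x | t < f x} :=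
    le_trans (rieszC_le_rieszM Λ hK'cl) (measure_mono hKU)
  -- put everything together in ℝ≥0∞
  have step : (Λ p : ℝ≥0∞) ≤ ((δ * rieszContentAux Λ ⟨K', hK'cl.isCompact⟩ : ℝ≥0) : ℝ≥0∞)
      + ((c * δ * Λ 1 : ℝ≥0) : ℝ≥0∞) := by
    rw [← ENNReal.coe_add]
    refine ENNReal.coe_le_coe.mpr ?_
    calc (Λ p : ℝ≥0) ≤ (Λ p : ℝ≥0) - c * δ * Λ 1 + c * δ * Λ 1 := le_tsub_add
    _ ≤ δ * rieszContentAux Λ ⟨K', hK'cl.isCompact⟩ + c * δ * Λ 1 :=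
        add_le_add_left hcont _
  calc (Λ p : ℝ≥0∞) ≤ ((δ * rieszContentAux Λ ⟨K', hK'cl.isCompact⟩ : ℝ≥0) : ℝ≥0∞)
      + ((c * δ * Λ 1 : ℝ≥0) : ℝ≥0∞) := step
  _ ≤ (δ : ℝ≥0∞) * rieszM Λ {x | t < f x} + ε := by
      refine add_le_add ?_ ?_
      · rw [ENNReal.coe_mul]
        exact mul_le_mul_right hμ _
      · refine ENNReal.coe_le_coe.mpr ?_
        calc c * δ * Λ 1 = c * (δ * Λ 1) := by ring
        _ ≤ ε := hcε

lemma piece_lintegral_bounds (Λ : (Ω →ᵇ ℝ≥0) →ₗ[ℝ≥0] ℝ≥0) (f : Ω →ᵇ ℝ≥0) {δ : ℝ≥0}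
    (hδ : 0 < δ) (t : ℝ≥0) :
    (δ : ℝ≥0∞) * rieszM Λ {x | t + δ ≤ f x} ≤ ∫⁻ x, (piece f t δ x : ℝ≥0∞) ∂(rieszM Λ) ∧
    ∫⁻ x, (piece f t δ x : ℝ≥0∞) ∂(rieszM Λ) ≤ (δ : ℝ≥0∞) * rieszM Λ {x | t < f x} := by
  constructor
  · have hpt : ∀ x, ({x | t + δ ≤ f x}).indicator (fun _ => (δ : ℝ≥0∞)) x
        ≤ (piece f t δ x : ℝ≥0∞) := by
      intro x
      rcases le_or_gt (t + δ) (f x) with hx | hx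
      · have hxm : x ∈ {x | t + δ ≤ f x} := hx
        rw [Set.indicator_of_mem hxm]
        have h1 : δ ≤ f x - t := le_tsub_of_add_le_left hx
        rw [piece_apply, min_eq_right h1]
      · have hxm : x ∉ {x | t + δ ≤ f x} := not_le.mpr hx
        rw [Set.indicator_of_notMem hxm]
        exact zero_le'
    calc (δ : ℝ≥0∞) * rieszM Λ {x | t + δ ≤ f x}
        = ∫⁻ x, ({x | t + δ ≤ f x}).indicator (fun _ => (δ : ℝ≥0∞)) x ∂(rieszM Λ) := by
          rw [lintegral_indicator (isClosed_levelK f (t + δ)).measurableSet,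
            setLIntegral_const]
    _ ≤ _ := lintegral_mono hpt
  · have hpt : ∀ x, (piece f t δ x : ℝ≥0∞)
        ≤ ({x | t < f x}).indicator (fun _ => (δ : ℝ≥0∞)) x := by
      intro x
      rcases lt_or_ge t (f x) with hx | hx
      · have hxm : x ∈ {x | t < f x} := hx
        rw [Set.indicator_of_mem hxm]
        exact ENNReal.coe_le_coe.mpr (by rw [piece_apply]; exact min_le_right _ _)
      · have hxm : x ∉ {x | t < f x} := not_lt.mpr hx
        rw [Set.indicator_of_notMem hxm]
        have h1 : f x - t = 0 := tsub_eq_zero_of_le hx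
        simp [piece_apply, h1]
    calc ∫⁻ x, (piece f t δ x : ℝ≥0∞) ∂(rieszM Λ) ≤
        ∫⁻ x, ({x | t < f x}).indicator (fun _ => (δ : ℝ≥0∞)) x ∂(rieszM Λ) :=
          lintegral_mono hpt
    _ = (δ : ℝ≥0∞) * rieszM Λ {x | t < f x} := by
          rw [lintegral_indicator (isOpen_levelU f t).measurableSet, setLIntegral_const]


/-- Pointwise bound of a `ℝ≥0`-valued BCF by its distance to zero. -/
lemma bcf_le_B (f : Ω →ᵇ ℝ≥0) (x : Ω) : f x ≤ nndist f 0 + 1 := by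
  have h := BoundedContinuousFunction.dist_coe_le_dist (f := f) (g := 0) x
  have h2 : dist (f x) ((0 : Ω →ᵇ ℝ≥0) x) = (f x : ℝ) := by
    have hz : ((0 : Ω →ᵇ ℝ≥0) x) = 0 := rfl
    rw [hz, NNReal.dist_eq, NNReal.coe_zero, sub_zero, abs_of_nonneg (f x).coe_nonneg]
  rw [h2] at h
  have h3 : (f x : ℝ) ≤ (nndist f 0 : ℝ) := by
    rwa [← dist_nndist]
  have h4 : f x ≤ nndist f 0 := by exact_mod_cast h3
  exact h4.trans (by simp)

/-- **Riesz representation**: the Riesz measure integrates bounded continuous functions to the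
value of the functional. -/
theorem lintegral_rieszM (Λ : (Ω →ᵇ ℝ≥0) →ₗ[ℝ≥0] ℝ≥0) (f : Ω →ᵇ ℝ≥0) :
    ∫⁻ x, (f x : ℝ≥0∞) ∂(rieszM Λ) = (Λ f : ℝ≥0∞) := by
  set μ := rieszM Λ with hμdef
  set B : ℝ≥0 := nndist f 0 + 1 with hB
  have hB0 : 0 < B := by positivity
  have hfB : ∀ x, f x ≤ B := bcf_le_B f
  have hMfin : μ univ ≠ ∞ := (measure_ne_top μ univ)
  -- the two-sided estimate for each n
  have main : ∀ n : ℕ, 0 < n →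
      (∫⁻ x, (f x : ℝ≥0∞) ∂μ ≤ (Λ f : ℝ≥0∞) + ((B / n : ℝ≥0) : ℝ≥0∞) * μ univ ∧
       (Λ f : ℝ≥0∞) ≤ ∫⁻ x, (f x : ℝ≥0∞) ∂μ + ((B / n : ℝ≥0) : ℝ≥0∞) * μ univ) := by
    intro n hn
    obtain ⟨m, rfl⟩ : ∃ m, n = m + 1 := ⟨n - 1, (Nat.succ_pred_eq_of_pos hn).symm⟩
    set n := m + 1
    set δ : ℝ≥0 := B / n with hδdef
    have hnn : (0 : ℝ≥0) < (n : ℝ≥0) := by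
      have : ((0 : ℕ) : ℝ≥0) < ((n : ℕ) : ℝ≥0) := Nat.cast_lt.mpr (Nat.succ_pos m)
      simpa using this
    have hδ : 0 < δ := div_pos hB0 hnn
    have hnδ : (n : ℝ≥0) * δ = B := by
      rw [hδdef, mul_comm, div_mul_cancel₀]
      exact hnn.ne'
    set t : ℕ → ℝ≥0 := fun i => (i : ℝ≥0) * δ with ht
    -- the decomposition of f into pieces
    have hsum : ∀ x, ∑ i ∈ Finset.range n, piece f (t i) δ x = f x := by
      intro x
      have := sum_min_tsub (f x) δ n
      simp only [piece_apply, ht]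
      rw [this, hnδ, min_eq_left (hfB x)]
    have hfs : ∑ i ∈ Finset.range n, piece f (t i) δ = f := by
      ext x
      have h1 : ((∑ i ∈ Finset.range n, piece f (t i) δ) x : ℝ≥0)
          = ∑ i ∈ Finset.range n, piece f (t i) δ x := by
        simp
      have := hsum x
      rw [← this, ← h1]
    have hΛ : (Λ f : ℝ≥0) = ∑ i ∈ Finset.range n, Λ (piece f (t i) δ) :=
      (congrArg Λ hfs.symm).trans (map_sum Λ (fun i => piece f (t i) δ) (Finset.range n))
    have hI : ∫⁻ x, (f x : ℝ≥0∞) ∂μ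
        = ∑ i ∈ Finset.range n, ∫⁻ x, (piece f (t i) δ x : ℝ≥0∞) ∂μ := by
      rw [← lintegral_finset_sum]
      · congr 1
        ext x
        rw [← ENNReal.coe_finset_sum, hsum x]
      · intro i _
        exact measurable_coe_nnreal_ennreal.comp (piece f (t i) δ).continuous.measurable
    -- lower and upper Riemann-type sums
    set L : ℝ≥0∞ := ∑ i ∈ Finset.range n, (δ : ℝ≥0∞) * μ {x | t i + δ ≤ f x} with hL
    set Up : ℝ≥0∞ := ∑ i ∈ Finset.range n, (δ : ℝ≥0∞) * μ {x | t i < f x} with hUp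
    have hΛlow : L ≤ (Λ f : ℝ≥0∞) := by
      rw [hΛ, ENNReal.coe_finset_sum, hL]
      exact Finset.sum_le_sum fun i _ => piece_le_K Λ f hδ (t i)
    have hΛup : (Λ f : ℝ≥0∞) ≤ Up := by
      rw [hΛ, ENNReal.coe_finset_sum, hUp]
      exact Finset.sum_le_sum fun i _ => piece_le_U Λ f hδ (t i)
    have hIlow : L ≤ ∫⁻ x, (f x : ℝ≥0∞) ∂μ := by
      rw [hI, hL]
      exact Finset.sum_le_sum fun i _ => (piece_lintegral_bounds Λ f hδ (t i)).1
    have hIup : ∫⁻ x, (f x : ℝ≥0∞) ∂μ ≤ Up := by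
      rw [hI, hUp]
      exact Finset.sum_le_sum fun i _ => (piece_lintegral_bounds Λ f hδ (t i)).2
    have hgap : Up ≤ (δ : ℝ≥0∞) * μ univ + L := by
      rw [hUp, Finset.sum_range_succ']
      have h0 : (δ : ℝ≥0∞) * μ {x | t 0 < f x} ≤ (δ : ℝ≥0∞) * μ univ :=
        mul_le_mul_right (measure_mono (subset_univ _)) _
      have h1 : ∑ i ∈ Finset.range m, (δ : ℝ≥0∞) * μ {x | t (i + 1) < f x} ≤ L := by
        rw [hL]
        refine le_trans (Finset.sum_le_sum fun i _ => ?_)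
          (Finset.sum_le_sum_of_subset (Finset.range_subset_range.mpr (Nat.le_succ m)))
        refine mul_le_mul_right (measure_mono ?_) _
        intro x hx
        have hx' : t (i + 1) < f x := hx
        have : t (i + 1) = t i + δ := by
          simp only [ht]
          push_cast
          ring
        rw [this] at hx'
        exact hx'.le
      calc (∑ i ∈ Finset.range m, (δ : ℝ≥0∞) * μ {x | t (i + 1) < f x})
          + (δ : ℝ≥0∞) * μ {x | t 0 < f x} ≤ L + (δ : ℝ≥0∞) * μ univ := add_le_add h1 h0
      _ = (δ : ℝ≥0∞) * μ univ + L := add_comm _ _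
    constructor
    · calc ∫⁻ x, (f x : ℝ≥0∞) ∂μ ≤ Up := hIup
      _ ≤ (δ : ℝ≥0∞) * μ univ + L := hgap
      _ ≤ (δ : ℝ≥0∞) * μ univ + (Λ f : ℝ≥0∞) := add_le_add_right hΛlow _
      _ = (Λ f : ℝ≥0∞) + ((B / n : ℝ≥0) : ℝ≥0∞) * μ univ := by rw [add_comm, hδdef]
    · calc (Λ f : ℝ≥0∞) ≤ Up := hΛup
      _ ≤ (δ : ℝ≥0∞) * μ univ + L := hgap
      _ ≤ (δ : ℝ≥0∞) * μ univ + ∫⁻ x, (f x : ℝ≥0∞) ∂μ := add_le_add_right hIlow _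
      _ = ∫⁻ x, (f x : ℝ≥0∞) ∂μ + ((B / n : ℝ≥0) : ℝ≥0∞) * μ univ := by
          rw [add_comm, hδdef]
  -- choose n making the error small
  have hsmall : ∀ ε : ℝ≥0, 0 < ε → ∃ n : ℕ, 0 < n ∧
      ((B / n : ℝ≥0) : ℝ≥0∞) * μ univ ≤ (ε : ℝ≥0∞) := by
    intro ε hε
    set M : ℝ≥0 := (μ univ).toNNReal with hM
    have hμM : μ univ = (M : ℝ≥0∞) := (ENNReal.coe_toNNReal hMfin).symm
    obtain ⟨n₀, hn₀⟩ := exists_nat_ge (B * M / ε)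
    refine ⟨n₀ + 1, Nat.succ_pos _, ?_⟩
    have hn : B * M / ε ≤ ((n₀ + 1 : ℕ) : ℝ≥0) := by
      refine hn₀.trans ?_
      exact_mod_cast Nat.le_succ n₀
    have h1 : B * M ≤ ((n₀ + 1 : ℕ) : ℝ≥0) * ε := (div_le_iff₀ hε).mp hn
    have h2 : (B / ((n₀ + 1 : ℕ) : ℝ≥0)) * M ≤ ε := by
      rw [div_mul_eq_mul_div]
      refine (div_le_iff₀ ?_).mpr ?_
      · have : ((0 : ℕ) : ℝ≥0) < ((n₀ + 1 : ℕ) : ℝ≥0) := Nat.cast_lt.mpr (Nat.succ_pos n₀)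
        simpa using this
      · rw [mul_comm ε]
        exact h1
    rw [hμM, ← ENNReal.coe_mul]
    exact_mod_cast h2
  -- conclude
  have hIfin : ∫⁻ x, (f x : ℝ≥0∞) ∂μ ≠ ∞ := by
    have : ∫⁻ x, (f x : ℝ≥0∞) ∂μ ≤ (B : ℝ≥0∞) * μ univ := by
      calc ∫⁻ x, (f x : ℝ≥0∞) ∂μ ≤ ∫⁻ _, (B : ℝ≥0∞) ∂μ :=
            lintegral_mono fun x => ENNReal.coe_le_coe.mpr (hfB x)
      _ = (B : ℝ≥0∞) * μ univ := lintegral_const _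
    exact ne_top_of_le_ne_top (ENNReal.mul_ne_top ENNReal.coe_ne_top hMfin) this
  refine le_antisymm ?_ ?_
  · refine ENNReal.le_of_forall_pos_le_add fun ε hε _ => ?_
    obtain ⟨n, hn, hnε⟩ := hsmall ε hε
    exact ((main n hn).1).trans (add_le_add_right hnε _)
  · refine ENNReal.le_of_forall_pos_le_add fun ε hε _ => ?_
    obtain ⟨n, hn, hnε⟩ := hsmall ε hε
    exact ((main n hn).2).trans (add_le_add_right hnε _)


/-- **Prokhorov-type compactness**: the space of Borel probability measures on a compact metric
space is compact in the topology of weak convergence. -/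
theorem compactSpace_probabilityMeasure : CompactSpace (ProbabilityMeasure Ω) := by
  constructor
  rw [isCompact_iff_ultrafilter_le_nhds]
  intro 𝒰 _
  -- the test functionals
  set T : (Ω →ᵇ ℝ≥0) → ProbabilityMeasure Ω → ℝ≥0 :=
    fun f ν => ν.toFiniteMeasure.testAgainstNN f with hT
  have hbdd : ∀ (f : Ω →ᵇ ℝ≥0) (ν : ProbabilityMeasure Ω),
      T f ν ∈ Icc (0 : ℝ≥0) (nndist f 0) := by
    intro f ν
    refine ⟨zero_le', ?_⟩
    have h := ν.toFiniteMeasure.testAgainstNN_lipschitz_estimate f 0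
    rwa [FiniteMeasure.testAgainstNN_zero, zero_add, ν.mass_toFiniteMeasure, mul_one] at h
  have hex : ∀ f : Ω →ᵇ ℝ≥0, ∃ a : ℝ≥0, Tendsto (T f) 𝒰 (𝓝 a) := by
    intro f
    have hle : ↑(𝒰.map (T f)) ≤ 𝓟 (Icc (0 : ℝ≥0) (nndist f 0)) := by
      rw [le_principal_iff]
      exact Filter.mem_map.mpr (Filter.univ_mem' (fun ν => hbdd f ν))
    obtain ⟨a, _, ha⟩ := (isCompact_Icc (a := (0:ℝ≥0)) (b := nndist f 0)).ultrafilter_le_nhds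
      (𝒰.map (T f)) hle
    exact ⟨a, ha⟩
  choose Λ₀ hΛ₀ using hex
  -- the limit functional is linear
  have hadd : ∀ f g : Ω →ᵇ ℝ≥0, Λ₀ (f + g) = Λ₀ f + Λ₀ g := by
    intro f g
    have h1 : Tendsto (T (f + g)) 𝒰 (𝓝 (Λ₀ f + Λ₀ g)) := by
      have : T (f + g) = fun ν => T f ν + T g ν := by
        funext ν
        exact ν.toFiniteMeasure.testAgainstNN_add f g
      rw [this]
      exact (hΛ₀ f).add (hΛ₀ g)
    exact tendsto_nhds_unique (hΛ₀ (f + g)) h1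
  have hsmul : ∀ (c : ℝ≥0) (f : Ω →ᵇ ℝ≥0), Λ₀ (c • f) = c * Λ₀ f := by
    intro c f
    have h1 : Tendsto (T (c • f)) 𝒰 (𝓝 (c * Λ₀ f)) := by
      have : T (c • f) = fun ν => c * T f ν := by
        funext ν
        have := ν.toFiniteMeasure.testAgainstNN_smul (c := c) (f := f)
        simpa [smul_eq_mul] using this
      rw [this]
      exact (hΛ₀ f).const_mul c
    exact tendsto_nhds_unique (hΛ₀ (c • f)) h1
  set Λ : (Ω →ᵇ ℝ≥0) →ₗ[ℝ≥0] ℝ≥0 :=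
    { toFun := Λ₀
      map_add' := hadd
      map_smul' := hsmul } with hΛdef
  have hrep : ∀ f : Ω →ᵇ ℝ≥0, ∫⁻ x, (f x : ℝ≥0∞) ∂(rieszM Λ) = (Λ₀ f : ℝ≥0∞) :=
    fun f => lintegral_rieszM Λ f
  have hone : Λ₀ 1 = 1 := by
    have h1 : Tendsto (T 1) 𝒰 (𝓝 1) := by
      have : T 1 = fun _ => (1 : ℝ≥0) := by
        funext ν
        show ν.toFiniteMeasure.testAgainstNN 1 = 1
        rw [FiniteMeasure.testAgainstNN_one, ν.mass_toFiniteMeasure]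
      rw [this]
      exact tendsto_const_nhds
    exact tendsto_nhds_unique (hΛ₀ 1) h1
  have hprob : IsProbabilityMeasure (rieszM Λ) := by
    constructor
    have h1 := hrep 1
    have h2 : ∫⁻ x, ((1 : Ω →ᵇ ℝ≥0) x : ℝ≥0∞) ∂(rieszM Λ) = rieszM Λ univ := by
      simp
    rw [h2, hone] at h1
    simpa using h1
  set P : ProbabilityMeasure Ω := ⟨rieszM Λ, hprob⟩ with hP
  refine ⟨P, mem_univ _, ?_⟩
  have : Tendsto (id : ProbabilityMeasure Ω → ProbabilityMeasure Ω) 𝒰 (𝓝 P) := by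
    refine ProbabilityMeasure.tendsto_iff_forall_lintegral_tendsto.mpr ?_
    intro f
    have h2 : ∫⁻ x, (f x : ℝ≥0∞) ∂(P : Measure Ω) = ((Λ₀ f : ℝ≥0) : ℝ≥0∞) := hrep f
    rw [h2]
    have h3 : Tendsto (fun ν : ProbabilityMeasure Ω => ∫⁻ x, (f x : ℝ≥0∞) ∂(ν : Measure Ω))
        𝒰 (𝓝 ((Λ₀ f : ℝ≥0) : ℝ≥0∞)) := by
      have h4 : Tendsto (fun ν : ProbabilityMeasure Ω => ((T f ν : ℝ≥0) : ℝ≥0∞)) 𝒰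
          (𝓝 ((Λ₀ f : ℝ≥0) : ℝ≥0∞)) := (ENNReal.tendsto_coe).mpr (hΛ₀ f)
      refine h4.congr fun ν => ?_
      exact FiniteMeasure.testAgainstNN_coe_eq
    exact h3
  exact this


/-- Continuity of an abstract metric from its neighborhood-basis property. -/
lemma continuous_of_dist_basis {α : Type*} [TopologicalSpace α] (d : α → α → ℝ)
    (hd_symm : ∀ a b, d a b = d b a)
    (hd_tri : ∀ a b c, d a c ≤ d a b + d b c)
    (hd_top : ∀ a, (𝓝 a).HasBasis (fun ε : ℝ => 0 < ε) (fun ε => {b | d a b < ε})) :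
    Continuous fun q : α × α => d q.1 q.2 := by
  rw [continuous_iff_continuousAt]
  rintro ⟨a, b⟩
  rw [ContinuousAt]
  rw [Metric.tendsto_nhds]
  intro ε hε
  rw [nhds_prod_eq]
  rw [((hd_top a).prod (hd_top b)).eventually_iff]
  refine ⟨(ε / 2, ε / 2), ⟨half_pos hε, half_pos hε⟩, ?_⟩
  rintro ⟨z₁, z₂⟩ hz
  have h1 : d a z₁ < ε / 2 := hz.1
  have h2 : d b z₂ < ε / 2 := hz.2
  have t1 : d z₁ z₂ ≤ d z₁ a + d a z₂ := hd_tri _ _ _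
  have t2 : d a z₂ ≤ d a b + d b z₂ := hd_tri _ _ _
  have t3 : d a b ≤ d a z₁ + d z₁ b := hd_tri _ _ _
  have t4 : d z₁ b ≤ d z₁ z₂ + d z₂ b := hd_tri _ _ _
  have s1 : d z₁ a = d a z₁ := hd_symm _ _
  have s2 : d z₂ b = d b z₂ := hd_symm _ _
  rw [Real.dist_eq, abs_lt]
  constructor <;> linarith

lemma dist_nonneg' {α : Type*} (d : α → α → ℝ)
    (hd_symm : ∀ a b, d a b = d b a) (hd_self : ∀ a, d a a = 0)
    (hd_tri : ∀ a b c, d a c ≤ d a b + d b c) (a b : α) : 0 ≤ d a b := by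
  have h := hd_tri a b a
  rw [hd_self a, hd_symm b a] at h
  linarith

end FoldedOT

noncomputable section

variable {X : Type*} [NormedAddCommGroup X] [NormedSpace ℝ X] [CompleteSpace X]
  [MeasurableSpace X] [BorelSpace X]

/-- Existence of a representing probability measure (Choquet-type, via Krein–Milman and
weak compactness). -/
theorem foldedAux_repProb_exists (C E : Set X) (hCcp : IsCompact C) (hCcv : Convex ℝ C)
    (hE : E = extremePoints ℝ C) (hEcp : IsCompact E) {x : X} (hx : x ∈ C) :
    ∃ μ : ProbabilityMeasure E, μ ∈ RepProb E x := by
  haveI : CompactSpace ↥E := isCompact_iff_compactSpace.mp hEcp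
  haveI : CompactSpace (ProbabilityMeasure ↥E) := FoldedOT.compactSpace_probabilityMeasure
  -- Step 1: representing measures for finite convex combinations
  have hfin : ∀ w ∈ convexHull ℝ E, ∃ μ : ProbabilityMeasure E,
      ∀ f : X →L[ℝ] ℝ, ∫ z, f (z : X) ∂(μ : Measure E) = f w := by
    intro w hw
    rw [convexHull_eq] at hw
    obtain ⟨ι, t, wt, zt, hw0, hw1, hzE, hcm⟩ := hw
    have hcm' : ∑ i ∈ t, wt i • zt i = w := by
      rw [← Finset.centerMass_eq_of_sum_1 t zt hw1]
      exact hcm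
    set pt : {i // i ∈ t} → ↥E := fun i => ⟨zt i.1, hzE i.1 i.2⟩ with hpt
    set m : Measure ↥E :=
      ∑ i ∈ t.attach, (ENNReal.ofReal (wt i.1)) • Measure.dirac (pt i) with hm
    have hm_univ : m univ = 1 := by
      rw [hm, Measure.finset_sum_apply]
      have : ∀ i ∈ t.attach,
          ((ENNReal.ofReal (wt i.1)) • Measure.dirac (pt i)) univ = ENNReal.ofReal (wt i.1) := by
        intro i _
        simp [Measure.smul_apply]
      rw [Finset.sum_congr rfl this]
      rw [← ENNReal.ofReal_sum_of_nonneg (fun i _ => hw0 i.1 i.2)]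
      rw [Finset.sum_attach t wt, hw1, ENNReal.ofReal_one]
    haveI hmp : IsProbabilityMeasure m := ⟨hm_univ⟩
    refine ⟨⟨m, hmp⟩, ?_⟩
    intro f
    have hfc : Continuous fun z : ↥E => f (z : X) := f.continuous.comp continuous_subtype_val
    have hint : ∀ i ∈ t.attach, Integrable (fun z : ↥E => f (z : X))
        ((ENNReal.ofReal (wt i.1)) • Measure.dirac (pt i)) := by
      intro i _
      haveI : IsFiniteMeasure ((ENNReal.ofReal (wt i.1)) • Measure.dirac (pt i)) := by
        constructor
        rw [Measure.smul_apply, smul_eq_mul]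
        exact ENNReal.mul_lt_top ENNReal.ofReal_lt_top (by simp)
      exact (BoundedContinuousFunction.mkOfCompact ⟨fun z : ↥E => f (z : X), hfc⟩).integrable _
    have hcalc : ∫ z, f (z : X) ∂m
        = ∑ i ∈ t.attach, ∫ z, f (z : X) ∂((ENNReal.ofReal (wt i.1)) • Measure.dirac (pt i)) :=
      integral_finset_sum_measure hint
    show ∫ z, f (z : X) ∂m = f w
    rw [hcalc]
    have hterm : ∀ i ∈ t.attach,
        ∫ z, f (z : X) ∂((ENNReal.ofReal (wt i.1)) • Measure.dirac (pt i))
          = wt i.1 * f (zt i.1) := by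
      intro i _
      rw [integral_smul_measure, integral_dirac' _ _ hfc.stronglyMeasurable,
        ENNReal.toReal_ofReal (hw0 i.1 i.2)]
      simp [hpt, smul_eq_mul]
    rw [Finset.sum_congr rfl hterm, Finset.sum_attach t (fun i => wt i * f (zt i)), ← hcm',
      map_sum]
    refine Finset.sum_congr rfl fun i _ => ?_
    rw [f.map_smul, smul_eq_mul]
  -- Step 2: pass to the closure by weak compactness
  have hKM := closure_convexHull_extremePoints hCcp hCcv
  have hxcl : x ∈ closure (convexHull ℝ E) := by
    rw [hE, hKM]
    exact hx
  obtain ⟨u, hu, hulim⟩ := mem_closure_iff_seq_limit.mp hxcl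
  choose μs hμs using fun n => hfin (u n) (hu n)
  set F : Filter (ProbabilityMeasure ↥E) := Filter.map μs atTop with hF
  haveI : F.NeBot := Filter.map_neBot
  obtain ⟨μ, hcl⟩ := exists_clusterPt_of_compactSpace F
  refine ⟨μ, ?_⟩
  intro f
  set G : ProbabilityMeasure ↥E → ℝ := fun ν => ∫ z, f (z : X) ∂(ν : Measure ↥E) with hG
  have hGc : Continuous G :=
    ProbabilityMeasure.continuous_integral_boundedContinuousFunction
      (BoundedContinuousFunction.mkOfCompact
        ⟨fun z : ↥E => f (z : X), f.continuous.comp continuous_subtype_val⟩)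
  have h1 : NeBot (𝓝 (G μ) ⊓ Filter.map G F) := by
    have h2 : Filter.map G (𝓝 μ ⊓ F) ≤ 𝓝 (G μ) ⊓ Filter.map G F := by
      refine le_inf ?_ (Filter.map_mono inf_le_right)
      exact le_trans (Filter.map_mono inf_le_left) hGc.continuousAt
    haveI : NeBot (Filter.map G (𝓝 μ ⊓ F)) := Filter.NeBot.map hcl G
    exact Filter.neBot_of_le h2
  have h3 : Filter.map G F ≤ 𝓝 (f x) := by
    rw [hF, Filter.map_map]
    have heq : (G ∘ μs) = fun n => f (u n) := funext fun n => hμs n f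
    rw [heq]
    exact (f.continuous.continuousAt.tendsto).comp hulim
  have h4 : NeBot (𝓝 (G μ) ⊓ 𝓝 (f x)) := Filter.neBot_of_le (inf_le_inf_left _ h3) (hf := h1)
  exact eq_of_nhds_neBot h4

/-- The infimum defining `D̂_p(x,y)^p` over representing couplings is
attained: there exists `π* ∈ P_(x,y)` with `D̂_p(x,y)^p = ∬ d(z,z*)^p dπ*`. -/
theorem foldedOT_optimal_plan_exists
    (C E : Set X) (hCne : C.Nonempty) (hCcp : IsCompact C) (hCcv : Convex ℝ C)
    (hE : E = extremePoints ℝ C) (hEcp : IsCompact E)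
    (d : E → E → ℝ)
    (hd_symm : ∀ a b : E, d a b = d b a)
    (hd_self : ∀ a : E, d a a = 0)
    (hd_pos : ∀ a b : E, a ≠ b → 0 < d a b)
    (hd_tri : ∀ a b c : E, d a c ≤ d a b + d b c)
    (hd_top : ∀ a : E, (𝓝 a).HasBasis (fun ε : ℝ => 0 < ε) (fun ε => {b : E | d a b < ε}))
    (p : ℝ) (hp : 1 ≤ p) :
    ∀ x ∈ C, ∀ y ∈ C, ∃ π ∈ RepCoupling E x y,
      hatD E d p x y ^ p = ∫ z, d z.1 z.2 ^ p ∂(π : Measure (E × E)) := by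
  intro x hx y hy
  classical
  -- basic instances
  haveI : CompactSpace ↥E := isCompact_iff_compactSpace.mp hEcp
  haveI : TopologicalSpace.SeparableSpace ↥E :=
    TopologicalSpace.isSeparable_univ_iff.mp isCompact_univ.isSeparable
  haveI : SecondCountableTopology ↥E := UniformSpace.secondCountable_of_separable ↥E
  haveI : CompactSpace (ProbabilityMeasure (↥E × ↥E)) := FoldedOT.compactSpace_probabilityMeasure
  -- basic properties of d and the cost function
  have hdc : Continuous fun q : ↥E × ↥E => d q.1 q.2 :=
    FoldedOT.continuous_of_dist_basis d hd_symm hd_tri hd_top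
  have hd0 : ∀ a b, 0 ≤ d a b := FoldedOT.dist_nonneg' d hd_symm hd_self hd_tri
  have hp0 : (0 : ℝ) < p := lt_of_lt_of_le one_pos hp
  have hgc : Continuous fun q : ↥E × ↥E => d q.1 q.2 ^ p :=
    hdc.rpow_const (fun q => Or.inr hp0.le)
  have hg0 : ∀ q : ↥E × ↥E, 0 ≤ d q.1 q.2 ^ p := fun q => Real.rpow_nonneg (hd0 _ _) p
  set F2 : ProbabilityMeasure (↥E × ↥E) → ℝ :=
    fun π => ∫ q, d q.1 q.2 ^ p ∂(π : Measure (↥E × ↥E)) with hF2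
  have hF2c : Continuous F2 :=
    ProbabilityMeasure.continuous_integral_boundedContinuousFunction
      (BoundedContinuousFunction.mkOfCompact ⟨fun q : ↥E × ↥E => d q.1 q.2 ^ p, hgc⟩)
  have hF2nonneg : ∀ π, 0 ≤ F2 π := fun π => integral_nonneg (fun q => hg0 q)
  -- an auxiliary integration identity for marginals
  have hmar : ∀ (π : ProbabilityMeasure (↥E × ↥E)) (f : X →L[ℝ] ℝ),
      ∫ z, f (z.1 : X) ∂(π : Measure (↥E × ↥E))
        = ∫ z, f (z : X) ∂((π : Measure (↥E × ↥E)).map Prod.fst) :=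
    fun π f => (integral_map measurable_fst.aemeasurable
      ((f.continuous.comp continuous_subtype_val).aestronglyMeasurable)).symm
  have hmar2 : ∀ (π : ProbabilityMeasure (↥E × ↥E)) (f : X →L[ℝ] ℝ),
      ∫ z, f (z.2 : X) ∂(π : Measure (↥E × ↥E))
        = ∫ z, f (z : X) ∂((π : Measure (↥E × ↥E)).map Prod.snd) :=
    fun π f => (integral_map measurable_snd.aemeasurable
      ((f.continuous.comp continuous_subtype_val).aestronglyMeasurable)).symm
  -- couplings with representing marginals are representing couplings
  have hmem : ∀ (π : ProbabilityMeasure (↥E × ↥E)) (μ ν : ProbabilityMeasure ↥E),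
      μ ∈ RepProb E x → ν ∈ RepProb E y →
      (π : Measure (↥E × ↥E)).map Prod.fst = (μ : Measure ↥E) →
      (π : Measure (↥E × ↥E)).map Prod.snd = (ν : Measure ↥E) →
      π ∈ RepCoupling E x y := by
    intro π μ ν hμ hν h1 h2 f
    constructor
    · rw [hmar π f, h1]
      exact hμ f
    · rw [hmar2 π f, h2]
      exact hν f
  -- the set of representing couplings is compact
  set K : Set (ProbabilityMeasure (↥E × ↥E)) := RepCoupling E x y with hK
  have hKcl : IsClosed K := by
    have hKeq : K = ⋂ f : X →L[ℝ] ℝ,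
        ({π : ProbabilityMeasure (↥E × ↥E) |
            ∫ z, f (z.1 : X) ∂(π : Measure (↥E × ↥E)) = f x} ∩
         {π : ProbabilityMeasure (↥E × ↥E) |
            ∫ z, f (z.2 : X) ∂(π : Measure (↥E × ↥E)) = f y}) := by
      ext π
      simp only [hK, RepCoupling, Set.mem_setOf_eq, Set.mem_iInter, Set.mem_inter_iff]
    rw [hKeq]
    refine isClosed_iInter fun f => IsClosed.inter ?_ ?_
    · exact isClosed_eq (ProbabilityMeasure.continuous_integral_boundedContinuousFunction
        (BoundedContinuousFunction.mkOfCompact ⟨fun z : ↥E × ↥E => f (z.1 : X),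
          f.continuous.comp (continuous_subtype_val.comp continuous_fst)⟩)) continuous_const
    · exact isClosed_eq (ProbabilityMeasure.continuous_integral_boundedContinuousFunction
        (BoundedContinuousFunction.mkOfCompact ⟨fun z : ↥E × ↥E => f (z.2 : X),
          f.continuous.comp (continuous_subtype_val.comp continuous_snd)⟩)) continuous_const
  have hKcp : IsCompact K := hKcl.isCompact
  -- K is nonempty: use the product of representing measures
  obtain ⟨μx, hμx⟩ := foldedAux_repProb_exists C E hCcp hCcv hE hEcp hx
  obtain ⟨μy, hμy⟩ := foldedAux_repProb_exists C E hCcp hCcv hE hEcp hy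
  -- generic product coupling
  have hprod : ∀ μ ν : ProbabilityMeasure ↥E, ∃ π : ProbabilityMeasure (↥E × ↥E),
      (π : Measure (↥E × ↥E)).map Prod.fst = (μ : Measure ↥E) ∧
      (π : Measure (↥E × ↥E)).map Prod.snd = (ν : Measure ↥E) := by
    intro μ ν
    refine ⟨⟨(μ : Measure ↥E).prod (ν : Measure ↥E), by infer_instance⟩, ?_, ?_⟩
    · show Measure.map Prod.fst ((μ : Measure ↥E).prod (ν : Measure ↥E)) = (μ : Measure ↥E)
      rw [Measure.map_fst_prod]
      simp
    · show Measure.map Prod.snd ((μ : Measure ↥E).prod (ν : Measure ↥E)) = (ν : Measure ↥E)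
      rw [Measure.map_snd_prod]
      simp
  obtain ⟨π₀, hπ₀f, hπ₀s⟩ := hprod μx μy
  have hπ₀K : π₀ ∈ K := hmem π₀ μx μy hμx hμy hπ₀f hπ₀s
  -- minimize the cost over K
  obtain ⟨πopt, hπoptK, hminOn⟩ := hKcp.exists_isMinOn ⟨π₀, hπ₀K⟩ hF2c.continuousOn
  refine ⟨πopt, hπoptK, ?_⟩
  set m : ℝ := F2 πopt with hmdef
  have hm0 : 0 ≤ m := hF2nonneg πopt
  -- the marginals of the optimal coupling
  set μ1 : ProbabilityMeasure ↥E := πopt.map (f := Prod.fst) measurable_fst.aemeasurable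
    with hμ1def
  set ν1 : ProbabilityMeasure ↥E := πopt.map (f := Prod.snd) measurable_snd.aemeasurable
    with hν1def
  have hμ1coe : (μ1 : Measure ↥E) = (πopt : Measure (↥E × ↥E)).map Prod.fst :=
    ProbabilityMeasure.toMeasure_map πopt measurable_fst.aemeasurable
  have hν1coe : (ν1 : Measure ↥E) = (πopt : Measure (↥E × ↥E)).map Prod.snd :=
    ProbabilityMeasure.toMeasure_map πopt measurable_snd.aemeasurable
  have hμ1R : μ1 ∈ RepProb E x := by
    intro f
    rw [hμ1coe, ← hmar πopt f]
    exact (hπoptK f).1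
  have hν1R : ν1 ∈ RepProb E y := by
    intro f
    rw [hν1coe, ← hmar2 πopt f]
    exact (hπoptK f).2
  -- nonnegativity facts about the Wasserstein sets
  have hWset : ∀ μ ν : ProbabilityMeasure ↥E, ∀ r ∈ {r : ℝ | ∃ π ∈ Couplings μ ν,
      r = ∫ z, d z.1 z.2 ^ p ∂(π : Measure (↥E × ↥E))}, 0 ≤ r := by
    rintro μ ν r ⟨π, _, rfl⟩
    exact integral_nonneg fun q => hg0 q
  have hWnonneg : ∀ μ ν : ProbabilityMeasure ↥E, 0 ≤ Wp d p μ ν := by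
    intro μ ν
    exact Real.rpow_nonneg (Real.sInf_nonneg (hWset μ ν)) _
  -- upper bound : hatD ≤ m ^ (1/p)
  have hWub : Wp d p μ1 ν1 ≤ m ^ (1 / p) := by
    rw [Wp]
    refine Real.rpow_le_rpow (Real.sInf_nonneg (hWset μ1 ν1)) ?_ (by positivity)
    refine csInf_le ⟨0, hWset μ1 ν1⟩ ?_
    exact ⟨πopt, ⟨hμ1coe.symm, hν1coe.symm⟩, rfl⟩
  have hhatub : hatD E d p x y ≤ m ^ (1 / p) := by
    refine le_trans (csInf_le ?_ ?_) hWub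
    · refine ⟨0, ?_⟩
      rintro r ⟨μ, _, ν, _, rfl⟩
      exact hWnonneg μ ν
    · exact ⟨μ1, hμ1R, ν1, hν1R, rfl⟩
  -- lower bound : m ^ (1/p) ≤ hatD
  have hhatlb : m ^ (1 / p) ≤ hatD E d p x y := by
    refine le_csInf ⟨Wp d p μ1 ν1, μ1, hμ1R, ν1, hν1R, rfl⟩ ?_
    rintro r ⟨μ, hμ, ν, hν, rfl⟩
    rw [Wp]
    refine Real.rpow_le_rpow hm0 ?_ (by positivity)
    obtain ⟨πp, hπpf, hπps⟩ := hprod μ ν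
    refine le_csInf ⟨∫ z, d z.1 z.2 ^ p ∂(πp : Measure (↥E × ↥E)),
      πp, ⟨hπpf, hπps⟩, rfl⟩ ?_
    rintro b ⟨π, hπC, rfl⟩
    have hπK : π ∈ K := hmem π μ ν hμ hν hπC.1 hπC.2
    exact hminOn hπK
  have heq : hatD E d p x y = m ^ (1 / p) := le_antisymm hhatub hhatlb
  rw [heq, one_div, Real.rpow_inv_rpow hm0 hp0.ne']
end
end

section
/- In the general folded optimal transport setting, assume additionally that the relative interior Ri(C) is nonempty. Then for every p ≥ 1 the folded Wasserstein pseudo-distance D_p : C × C → ℝ is continuous with respect to the norm topology. -/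
open MeasureTheory Set Filter Topology

noncomputable section

variable {X : Type*} [NormedAddCommGroup X] [NormedSpace ℝ X] [CompleteSpace X]
  [MeasurableSpace X] [BorelSpace X]

/-- The relative interior of `C`: points of `C` around which a ball intersected with the
affine hull of `C` stays in `C`. -/
def relInt (C : Set X) : Set X :=
  {x ∈ C | ∃ ε > 0, (affineSpan ℝ C : Set X) ∩ Metric.ball x ε ⊆ C}

set_option linter.unusedSectionVars false
section Aux
variable {X : Type*} [NormedAddCommGroup X] [NormedSpace ℝ X] [CompleteSpace X]
  [MeasurableSpace X] [BorelSpace X]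

lemma contIntegrable {Ω : Type*} [TopologicalSpace Ω] [CompactSpace Ω] [MeasurableSpace Ω]
    [OpensMeasurableSpace Ω] (μ : Measure Ω) [IsFiniteMeasure μ] {f : Ω → ℝ}
    (hf : Continuous f) : Integrable f μ :=
  hf.integrable_of_hasCompactSupport (HasCompactSupport.of_compactSpace f)

lemma wp_nonneg {Ω : Type*} [MeasurableSpace Ω] (d : Ω → Ω → ℝ) (hd0 : ∀ a b, 0 ≤ d a b)
    (p : ℝ) (μ ν : ProbabilityMeasure Ω) : 0 ≤ Wp d p μ ν := by
  apply Real.rpow_nonneg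
  apply Real.sInf_nonneg
  rintro r ⟨π, -, rfl⟩
  exact integral_nonneg fun z => Real.rpow_nonneg (hd0 _ _) _

lemma hatD_nonneg (E : Set X) (d : E → E → ℝ) (hd0 : ∀ a b, 0 ≤ d a b) (p : ℝ) (x y : X) :
    0 ≤ hatD E d p x y :=
  Real.sInf_nonneg (by rintro r ⟨μ, -, ν, -, rfl⟩; exact wp_nonneg d hd0 p μ ν)

lemma foldD_bddBelow (C E : Set X) (d : E → E → ℝ) (hd0 : ∀ a b, 0 ≤ d a b) (p : ℝ) (x y : X) :
    BddBelow {r : ℝ | ∃ (N : ℕ) (z : ℕ → X), 1 ≤ N ∧ z 0 = x ∧ z N = y ∧ (∀ n ≤ N, z n ∈ C) ∧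
      r = ∑ n ∈ Finset.range N, hatD E d p (z n) (z (n + 1))} :=
  ⟨0, by rintro r ⟨N, z, -, -, -, -, rfl⟩
         exact Finset.sum_nonneg fun n _ => hatD_nonneg E d hd0 p _ _⟩

lemma foldD_nonneg (C E : Set X) (d : E → E → ℝ) (hd0 : ∀ a b, 0 ≤ d a b) (p : ℝ) (x y : X) :
    0 ≤ foldD C E d p x y :=
  Real.sInf_nonneg (by rintro r ⟨N, z, -, -, -, -, rfl⟩
                       exact Finset.sum_nonneg fun n _ => hatD_nonneg E d hd0 p _ _)


lemma foldD_mem_self {C E : Set X} {d : E → E → ℝ} {p : ℝ} {x y : X}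
    (hx : x ∈ C) (hy : y ∈ C) :
    hatD E d p x y ∈ {r : ℝ | ∃ (N : ℕ) (z : ℕ → X), 1 ≤ N ∧ z 0 = x ∧ z N = y ∧
      (∀ n ≤ N, z n ∈ C) ∧ r = ∑ n ∈ Finset.range N, hatD E d p (z n) (z (n + 1))} := by
  refine ⟨1, fun n => if n = 0 then x else y, le_refl 1, by norm_num, by norm_num, ?_, ?_⟩
  · intro n hn
    by_cases h : n = 0 <;> simp [h, hx, hy]
  · simp

lemma foldD_chain_le (C E : Set X) (d : E → E → ℝ) (hd0 : ∀ a b, 0 ≤ d a b) (p : ℝ)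
    {x m x' y' m' y : X} (hx : x ∈ C) (hm : m ∈ C) (hx' : x' ∈ C) (hy' : y' ∈ C)
    (hm' : m' ∈ C) (hy : y ∈ C) :
    foldD C E d p x y ≤ hatD E d p x m + hatD E d p m x' + foldD C E d p x' y'
      + hatD E d p y' m' + hatD E d p m' y := by
  have hbdd := foldD_bddBelow C E d hd0 p x y
  have hbdd' := foldD_bddBelow C E d hd0 p x' y'
  apply le_of_forall_pos_le_add
  intro ε hε
  -- pick a near-optimal chain for (x', y')
  have hne : {r : ℝ | ∃ (N : ℕ) (z : ℕ → X), 1 ≤ N ∧ z 0 = x' ∧ z N = y' ∧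
      (∀ n ≤ N, z n ∈ C) ∧ r = ∑ n ∈ Finset.range N, hatD E d p (z n) (z (n + 1))}.Nonempty :=
    ⟨_, foldD_mem_self hx' hy'⟩
  have hlt : foldD C E d p x' y' < foldD C E d p x' y' + ε := by linarith
  obtain ⟨r, hrS, hrlt⟩ := exists_lt_of_csInf_lt hne hlt
  obtain ⟨N, z, hN, hz0, hzN, hzC, rfl⟩ := hrS
  set z' : ℕ → X := fun n => if n = 0 then x else if n = 1 then m
    else if n ≤ N + 2 then z (n - 2) else if n = N + 3 then m' else y with hz'
  set g : ℕ → ℝ := fun n => hatD E d p (z' n) (z' (n + 1)) with hg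
  have hz'0 : z' 0 = x := by simp [hz']
  have hz'1 : z' 1 = m := by simp [hz']
  have hz'2 : z' 2 = x' := by simp [hz', hz0]
  have hz'mid : ∀ n, n ≤ N → z' (n + 2) = z n := by
    intro n hn
    rw [hz']
    dsimp only
    rw [if_neg (by omega), if_neg (by omega), if_pos (by omega)]
    congr 1
  have hz'N3 : z' (N + 3) = m' := by
    rw [hz']; dsimp only
    rw [if_neg (by omega), if_neg (by omega), if_neg (by omega), if_pos rfl]
  have hz'N4 : z' (N + 4) = y := by
    rw [hz']; dsimp only
    rw [if_neg (by omega), if_neg (by omega), if_neg (by omega), if_neg (by omega)]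
  have hmemb : ∀ n ≤ N + 4, z' n ∈ C := by
    intro n hn
    rw [hz']; dsimp only
    split_ifs with h1 h2 h3 h4
    · exact hx
    · exact hm
    · exact hzC _ (by omega)
    · exact hm'
    · exact hy
  have hmem : ∑ n ∈ Finset.range (N + 4), g n ∈ {r : ℝ | ∃ (N : ℕ) (z : ℕ → X),
      1 ≤ N ∧ z 0 = x ∧ z N = y ∧ (∀ n ≤ N, z n ∈ C) ∧
      r = ∑ n ∈ Finset.range N, hatD E d p (z n) (z (n + 1))} :=
    ⟨N + 4, z', by omega, hz'0, hz'N4, hmemb, rfl⟩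
  have hle : foldD C E d p x y ≤ ∑ n ∈ Finset.range (N + 4), g n := csInf_le hbdd hmem
  have hsum : ∑ n ∈ Finset.range (N + 4), g n
      = g 0 + g 1 + (∑ n ∈ Finset.range N, g (n + 1 + 1)) + g (N + 2) + g (N + 3) := by
    rw [Finset.sum_range_succ, Finset.sum_range_succ, Finset.sum_range_succ',
      Finset.sum_range_succ']
    ring
  have hmidsum : ∑ n ∈ Finset.range N, g (n + 1 + 1)
      = ∑ n ∈ Finset.range N, hatD E d p (z n) (z (n + 1)) := by
    refine Finset.sum_congr rfl fun n hn => ?_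
    have hn' : n < N := Finset.mem_range.mp hn
    show hatD E d p (z' (n + 2)) (z' (n + 2 + 1)) = _
    have h1 : z' (n + 2) = z n := hz'mid n (by omega)
    have h2 : z' (n + 2 + 1) = z (n + 1) := by
      have := hz'mid (n + 1) (by omega)
      convert this using 2
    rw [h1, h2]
  have hg0 : g 0 = hatD E d p x m := by rw [hg]; dsimp only; rw [hz'0, hz'1]
  have hg1 : g 1 = hatD E d p m x' := by rw [hg]; dsimp only; rw [hz'1, hz'2]
  have hgN2 : g (N + 2) = hatD E d p y' m' := by
    rw [hg]; dsimp only
    have h1 : z' (N + 2) = y' := by rw [hz'mid N le_rfl, hzN]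
    have h2 : z' (N + 2 + 1) = m' := by
      have : N + 2 + 1 = N + 3 := by omega
      rw [this, hz'N3]
    rw [h1, h2]
  have hgN3 : g (N + 3) = hatD E d p m' y := by
    rw [hg]; dsimp only
    have h2 : z' (N + 3 + 1) = y := by
      have : N + 3 + 1 = N + 4 := by omega
      rw [this, hz'N4]
    rw [hz'N3, h2]
  rw [hsum, hmidsum, hg0, hg1, hgN2, hgN3] at hle
  linarith


lemma keyEstimate (E : Set X) (hEcp : IsCompact E)
    (d : E → E → ℝ) (hd0 : ∀ a b, 0 ≤ d a b) (hself : ∀ a, d a a = 0)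
    (hdc : Continuous fun q : E × E => d q.1 q.2)
    (M : ℝ) (hM0 : 0 ≤ M) (hM : ∀ a b, d a b ≤ M)
    (p : ℝ) (hp : 1 ≤ p)
    (x y c : X) (t : ℝ) (ht0 : 0 ≤ t) (ht1 : t ≤ 1)
    (hx : x = (1 - t) • y + t • c)
    (μ : ProbabilityMeasure E) (hμ : μ ∈ RepProb E y)
    (γ : ProbabilityMeasure E) (hγ : γ ∈ RepProb E c) :
    hatD E d p x y ≤ t ^ (1 / p) * M ∧ hatD E d p y x ≤ t ^ (1 / p) * M := by
  haveI : CompactSpace E := isCompact_iff_compactSpace.mp hEcp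
  have hp0 : p ≠ 0 := by positivity
  have hp0' : (0:ℝ) ≤ p := by linarith
  set a : ENNReal := ENNReal.ofReal (1 - t) with ha
  set b : ENNReal := ENNReal.ofReal t with hb
  have hab : a + b = 1 := by
    rw [ha, hb, ← ENNReal.ofReal_add (by linarith) ht0]
    norm_num
  have hat : a.toReal = 1 - t := ENNReal.toReal_ofReal (by linarith)
  have hbt : b.toReal = t := ENNReal.toReal_ofReal ht0
  set Δ : E → E × E := fun z => (z, z) with hΔdef
  have hΔ : Measurable Δ := measurable_id.prodMk measurable_id
  -- the mixture measure
  set νm : Measure E := a • (μ : Measure E) + b • (γ : Measure E) with hνm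
  haveI hνprob : IsProbabilityMeasure νm := by
    constructor
    rw [hνm]
    simp [Measure.add_apply, Measure.smul_apply, measure_univ, mul_one, hab]
  set ν : ProbabilityMeasure E := ⟨νm, hνprob⟩ with hνdef
  have hintf : ∀ (f : X →L[ℝ] ℝ) (ρ : Measure E) [IsFiniteMeasure ρ],
      Integrable (fun z : E => f (z : X)) ρ := fun f ρ _ =>
    contIntegrable ρ (f.continuous.comp continuous_subtype_val)
  have hν : ν ∈ RepProb E x := by
    intro f
    show ∫ z : E, f (z : X) ∂νm = f x
    rw [hνm, integral_add_measure ((hintf f _).smul_measure ENNReal.ofReal_ne_top)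
      ((hintf f _).smul_measure ENNReal.ofReal_ne_top),
      integral_smul_measure, integral_smul_measure, hμ f, hγ f, hat, hbt, hx]
    rw [map_add, _root_.map_smul, _root_.map_smul]
  -- instances for the couplings
  haveI : IsProbabilityMeasure ((μ : Measure E).map Δ) :=
    Measure.isProbabilityMeasure_map hΔ.aemeasurable
  -- the integrand
  set h : E × E → ℝ := fun z => d z.1 z.2 ^ p with hhdef
  have hhc : Continuous h := hdc.rpow_const fun q => Or.inr hp0'
  have hh0 : ∀ z, 0 ≤ h z := fun z => Real.rpow_nonneg (hd0 _ _) _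
  have hhM : ∀ z, h z ≤ M ^ p := fun z => Real.rpow_le_rpow (hd0 _ _) (hM _ _) hp0'
  -- integral over the diagonal part vanishes
  have hdiag : ∫ z, h z ∂((μ : Measure E).map Δ) = 0 := by
    rw [integral_map hΔ.aemeasurable hhc.aestronglyMeasurable]
    have : ∀ z : E, h (Δ z) = 0 := by
      intro z
      show d z z ^ p = 0
      rw [hself, Real.zero_rpow hp0]
    simp [this]
  have hprod_le : ∀ (ρ σ : Measure E) [IsProbabilityMeasure ρ] [IsProbabilityMeasure σ],
      ∫ z, h z ∂(ρ.prod σ) ≤ M ^ p := by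
    intro ρ σ _ _
    calc ∫ z, h z ∂(ρ.prod σ) ≤ ∫ _z, M ^ p ∂(ρ.prod σ) :=
          integral_mono_of_nonneg (Filter.Eventually.of_forall hh0)
            (integrable_const _) (Filter.Eventually.of_forall hhM)
      _ = M ^ p := by simp
  -- generic coupling estimate
  have main : ∀ (π : Measure (E × E)), π = a • ((μ : Measure E).map Δ) +
      b • (((γ : Measure E)).prod (μ : Measure E)) ∨
      π = a • ((μ : Measure E).map Δ) + b • (((μ : Measure E)).prod (γ : Measure E)) →
      ∫ z, h z ∂π ≤ t * M ^ p := by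
    rintro π (rfl | rfl) <;>
    · rw [integral_add_measure ((contIntegrable _ hhc).smul_measure ENNReal.ofReal_ne_top)
        ((contIntegrable _ hhc).smul_measure ENNReal.ofReal_ne_top),
        integral_smul_measure, integral_smul_measure, hdiag, hat, hbt]
      simp only [smul_eq_mul, mul_zero, zero_add]
      nlinarith [hprod_le ((γ : Measure E)) ((μ : Measure E)),
        hprod_le ((μ : Measure E)) ((γ : Measure E))]
  -- the two couplings
  set pm1 : Measure (E × E) := a • ((μ : Measure E).map Δ)
    + b • ((γ : Measure E).prod (μ : Measure E)) with hpm1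
  set pm2 : Measure (E × E) := a • ((μ : Measure E).map Δ)
    + b • ((μ : Measure E).prod (γ : Measure E)) with hpm2
  have hfstD : ((μ : Measure E).map Δ).map Prod.fst = (μ : Measure E) := by
    rw [Measure.map_map measurable_fst hΔ]
    have : Prod.fst ∘ Δ = id := rfl
    rw [this, Measure.map_id]
  have hsndD : ((μ : Measure E).map Δ).map Prod.snd = (μ : Measure E) := by
    rw [Measure.map_map measurable_snd hΔ]
    have : Prod.snd ∘ Δ = id := rfl
    rw [this, Measure.map_id]
  have hfst_prod : ∀ (ρ σ : Measure E) [IsProbabilityMeasure ρ] [IsProbabilityMeasure σ],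
      (ρ.prod σ).map Prod.fst = ρ := by
    intro ρ σ _ _
    have := Measure.fst_prod (μ := ρ) (ν := σ)
    simpa [Measure.fst] using this
  have hsnd_prod : ∀ (ρ σ : Measure E) [IsProbabilityMeasure ρ] [IsProbabilityMeasure σ],
      (ρ.prod σ).map Prod.snd = σ := by
    intro ρ σ _ _
    have := Measure.snd_prod (μ := ρ) (ν := σ)
    simpa [Measure.snd] using this
  haveI hp1 : IsProbabilityMeasure pm1 := by
    constructor
    rw [hpm1]
    simp [Measure.add_apply, Measure.smul_apply, measure_univ, mul_one, hab]
  haveI hp2 : IsProbabilityMeasure pm2 := by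
    constructor
    rw [hpm2]
    simp [Measure.add_apply, Measure.smul_apply, measure_univ, mul_one, hab]
  have hfst1 : pm1.map Prod.fst = (ν : Measure E) := by
    rw [hpm1, Measure.map_add _ _ measurable_fst, Measure.map_smul, Measure.map_smul,
      hfstD, hfst_prod]
    exact hνm.symm
  have hsnd1 : pm1.map Prod.snd = (μ : Measure E) := by
    rw [hpm1, Measure.map_add _ _ measurable_snd, Measure.map_smul, Measure.map_smul,
      hsndD, hsnd_prod, ← add_smul, hab, one_smul]
  have hfst2 : pm2.map Prod.fst = (μ : Measure E) := by
    rw [hpm2, Measure.map_add _ _ measurable_fst, Measure.map_smul, Measure.map_smul,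
      hfstD, hfst_prod, ← add_smul, hab, one_smul]
  have hsnd2 : pm2.map Prod.snd = (ν : Measure E) := by
    rw [hpm2, Measure.map_add _ _ measurable_snd, Measure.map_smul, Measure.map_smul,
      hsndD, hsnd_prod]
    exact hνm.symm
  -- generic Wasserstein bound from a coupling
  have hWp : ∀ (ρ σ : ProbabilityMeasure E) (pm : Measure (E × E))
      (hprob : IsProbabilityMeasure pm),
      pm.map Prod.fst = (ρ : Measure E) → pm.map Prod.snd = (σ : Measure E) →
      (∫ z, h z ∂pm ≤ t * M ^ p) → Wp d p ρ σ ≤ t ^ (1 / p) * M := by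
    intro ρ σ pm hprob hfst hsnd hint
    have hmem : ∫ z, h z ∂pm ∈ {r : ℝ | ∃ π ∈ Couplings ρ σ,
        r = ∫ z, d z.1 z.2 ^ p ∂(π : Measure (E × E))} :=
      ⟨⟨pm, hprob⟩, ⟨hfst, hsnd⟩, rfl⟩
    have hbdd : BddBelow {r : ℝ | ∃ π ∈ Couplings ρ σ,
        r = ∫ z, d z.1 z.2 ^ p ∂(π : Measure (E × E))} :=
      ⟨0, by rintro r ⟨π, -, rfl⟩; exact integral_nonneg fun z => hh0 z⟩
    have h1 : sInf {r : ℝ | ∃ π ∈ Couplings ρ σ,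
        r = ∫ z, d z.1 z.2 ^ p ∂(π : Measure (E × E))} ≤ t * M ^ p :=
      le_trans (csInf_le hbdd hmem) hint
    have h2 : 0 ≤ sInf {r : ℝ | ∃ π ∈ Couplings ρ σ,
        r = ∫ z, d z.1 z.2 ^ p ∂(π : Measure (E × E))} :=
      Real.sInf_nonneg (by rintro r ⟨π, -, rfl⟩; exact integral_nonneg fun z => hh0 z)
    show (sInf _) ^ (1 / p) ≤ _
    calc (sInf {r : ℝ | ∃ π ∈ Couplings ρ σ,
          r = ∫ z, d z.1 z.2 ^ p ∂(π : Measure (E × E))}) ^ (1 / p)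
        ≤ (t * M ^ p) ^ (1 / p) := Real.rpow_le_rpow h2 h1 (by positivity)
      _ = t ^ (1 / p) * M := by
          rw [Real.mul_rpow ht0 (Real.rpow_nonneg hM0 p), ← Real.rpow_mul hM0,
            mul_one_div_cancel hp0, Real.rpow_one]
  have hbd1 : BddBelow {r : ℝ | ∃ μ' ∈ RepProb E x, ∃ ν' ∈ RepProb E y, r = Wp d p μ' ν'} :=
    ⟨0, by rintro r ⟨μ', -, ν', -, rfl⟩; exact wp_nonneg d hd0 p _ _⟩
  have hbd2 : BddBelow {r : ℝ | ∃ μ' ∈ RepProb E y, ∃ ν' ∈ RepProb E x, r = Wp d p μ' ν'} :=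
    ⟨0, by rintro r ⟨μ', -, ν', -, rfl⟩; exact wp_nonneg d hd0 p _ _⟩
  constructor
  · have hW : Wp d p ν μ ≤ t ^ (1 / p) * M :=
      hWp ν μ pm1 hp1 hfst1 hsnd1 (main pm1 (Or.inl rfl))
    exact le_trans (csInf_le hbd1 ⟨ν, hν, μ, hμ, rfl⟩) hW
  · have hW : Wp d p μ ν ≤ t ^ (1 / p) * M :=
      hWp μ ν pm2 hp2 hfst2 hsnd2 (main pm2 (Or.inr rfl))
    exact le_trans (csInf_le hbd2 ⟨μ, hμ, ν, hν, rfl⟩) hW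


lemma dCont (E : Set X) (d : E → E → ℝ)
    (hd_symm : ∀ a b : E, d a b = d b a)
    (hd_tri : ∀ a b c : E, d a c ≤ d a b + d b c)
    (hd_top : ∀ a : E, (𝓝 a).HasBasis (fun ε : ℝ => 0 < ε) (fun ε => {b : E | d a b < ε})) :
    Continuous fun q : E × E => d q.1 q.2 := by
  rw [continuous_iff_continuousAt]
  rintro ⟨a₀, b₀⟩
  rw [ContinuousAt, Metric.tendsto_nhds]
  intro ε hε
  have h1 : {b : E | d a₀ b < ε / 2} ∈ 𝓝 a₀ := (hd_top a₀).mem_of_mem (by linarith)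
  have h2 : {b : E | d b₀ b < ε / 2} ∈ 𝓝 b₀ := (hd_top b₀).mem_of_mem (by linarith)
  rw [nhds_prod_eq]
  filter_upwards [Filter.prod_mem_prod h1 h2] with q hq
  obtain ⟨hqa, hqb⟩ := hq
  simp only [Set.mem_setOf_eq] at hqa hqb
  rw [Real.dist_eq, abs_sub_lt_iff]
  have t1 := hd_tri q.1 a₀ q.2
  have t2 := hd_tri a₀ b₀ q.2
  have t3 := hd_tri a₀ q.1 b₀
  have t4 := hd_tri q.1 q.2 b₀
  have s1 := hd_symm q.1 a₀
  have s2 := hd_symm q.2 b₀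
  constructor <;> linarith


end Aux

/-- If the relative interior of `C` is nonempty, then for every `p ≥ 1` the
folded Wasserstein pseudo-distance `D_p` is continuous on `C × C` with respect to the norm
topology. -/
theorem foldedOT_foldD_continuous
    (C E : Set X) (hCne : C.Nonempty) (hCcp : IsCompact C) (hCcv : Convex ℝ C)
    (hE : E = extremePoints ℝ C) (hEcp : IsCompact E)
    (d : E → E → ℝ)
    (hd_symm : ∀ a b : E, d a b = d b a)
    (hd_self : ∀ a : E, d a a = 0)
    (hd_pos : ∀ a b : E, a ≠ b → 0 < d a b)
    (hd_tri : ∀ a b c : E, d a c ≤ d a b + d b c)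
    (hd_top : ∀ a : E, (𝓝 a).HasBasis (fun ε : ℝ => 0 < ε) (fun ε => {b : E | d a b < ε}))
    (hRi : (relInt C).Nonempty)
    (p : ℝ) (hp : 1 ≤ p) :
    ContinuousOn (fun q : X × X => foldD C E d p q.1 q.2) (C ×ˢ C) := by
  classical
  have hp0 : p ≠ 0 := by positivity
  have hd0 : ∀ a b : E, 0 ≤ d a b := by
    intro a b
    have h1 := hd_tri a b a
    rw [hd_self a, hd_symm b a] at h1
    linarith
  have hdc : Continuous fun q : E × E => d q.1 q.2 := dCont E d hd_symm hd_tri hd_top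
  by_cases hrep : ∀ v ∈ C, (RepProb E v).Nonempty
  swap
  · -- degenerate case: some point of `C` has no representing measure, `foldD` vanishes
    push_neg at hrep
    obtain ⟨v, hvC, hv⟩ := hrep
    have hzero : ∀ q ∈ C ×ˢ C, (fun q : X × X => foldD C E d p q.1 q.2) q = 0 := by
      rintro ⟨x, y⟩ ⟨hx, hy⟩
      refine le_antisymm ?_ (foldD_nonneg C E d hd0 p x y)
      have hxv : hatD E d p x v = 0 := by
        unfold hatD
        convert Real.sInf_empty using 2
        rw [Set.eq_empty_iff_forall_notMem]
        rintro r ⟨μ', -, ν', hν', -⟩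
        rw [hv] at hν'
        exact (Set.notMem_empty _) hν'
      have hvy : hatD E d p v y = 0 := by
        unfold hatD
        convert Real.sInf_empty using 2
        rw [Set.eq_empty_iff_forall_notMem]
        rintro r ⟨μ', hμ', -⟩
        rw [hv] at hμ'
        exact (Set.notMem_empty _) hμ'
      have hmem : (0 : ℝ) ∈ {r : ℝ | ∃ (N : ℕ) (z : ℕ → X), 1 ≤ N ∧ z 0 = x ∧ z N = y ∧
          (∀ n ≤ N, z n ∈ C) ∧ r = ∑ n ∈ Finset.range N, hatD E d p (z n) (z (n + 1))} := by
        refine ⟨2, fun n => if n = 0 then x else if n = 1 then v else y, by norm_num,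
          by norm_num, by norm_num, ?_, ?_⟩
        · intro n hn
          interval_cases n <;> simp [hx, hvC, hy]
        · rw [Finset.sum_range_succ, Finset.sum_range_one]
          norm_num [hxv, hvy]
      exact csInf_le (foldD_bddBelow C E d hd0 p x y) hmem
    exact ContinuousOn.congr continuousOn_const hzero
  · -- main case: every point of `C` has a representing measure
    obtain ⟨w, hwC, εw, hεw, hsub⟩ := hRi
    haveI : CompactSpace E := isCompact_iff_compactSpace.mp hEcp
    -- E is nonempty
    obtain ⟨c₀, hc₀⟩ := hCne
    obtain ⟨μ₀, -⟩ := hrep c₀ hc₀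
    haveI hEne : Nonempty E := by
      by_contra hne
      rw [not_nonempty_iff] at hne
      have h1 : (μ₀ : Measure E) Set.univ = 1 := measure_univ
      rw [Set.univ_eq_empty_iff.mpr hne] at h1
      simp at h1
    -- a uniform bound on d
    obtain ⟨qs, -, hqs⟩ := isCompact_univ.exists_isMaxOn Set.univ_nonempty hdc.continuousOn
    set M : ℝ := d qs.1 qs.2 with hMdef
    have hM0 : 0 ≤ M := hd0 _ _
    have hM : ∀ a b : E, d a b ≤ M := fun a b => hqs (mem_univ (a, b))
    rw [Metric.continuousOn_iff]
    rintro ⟨x₀, y₀⟩ hq₀ ε hε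
    obtain ⟨hx₀, hy₀⟩ := hq₀
    set s : ℝ := min 1 ((ε / (9 * (M + 1))) ^ p) with hs
    have hs0 : 0 < s := lt_min one_pos (Real.rpow_pos_of_pos (by positivity) p)
    have hs1 : s ≤ 1 := min_le_left _ _
    have hsb : s ^ (1 / p) ≤ ε / (9 * (M + 1)) := by
      calc s ^ (1 / p) ≤ ((ε / (9 * (M + 1))) ^ p) ^ (1 / p) :=
            Real.rpow_le_rpow hs0.le (min_le_right _ _) (by positivity)
        _ = ε / (9 * (M + 1)) := by
            rw [← Real.rpow_mul (by positivity), mul_one_div_cancel hp0, Real.rpow_one]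
    have hsp0 : 0 ≤ s ^ (1 / p) := Real.rpow_nonneg hs0.le _
    have hb : s ^ (1 / p) * M ≤ ε / 9 := by
      have h9 : (0:ℝ) < 9 * (M + 1) := by positivity
      have h1 : s ^ (1 / p) * M ≤ (ε / (9 * (M + 1))) * M :=
        mul_le_mul_of_nonneg_right hsb hM0
      have h2 : (ε / (9 * (M + 1))) * M ≤ ε / 9 := by
        rw [div_mul_eq_mul_div, div_le_div_iff₀ h9 (by norm_num)]
        nlinarith
      linarith
    refine ⟨s * εw, by positivity, ?_⟩
    rintro ⟨x, y⟩ hq hdist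
    obtain ⟨hx, hy⟩ := hq
    rw [Prod.dist_eq] at hdist
    have hdx : ‖x₀ - x‖ < s * εw := by
      have h1 : dist x x₀ < s * εw := lt_of_le_of_lt (le_max_left _ _) hdist
      rw [dist_eq_norm] at h1
      rwa [← norm_neg, neg_sub]
    have hdy : ‖y₀ - y‖ < s * εw := by
      have h1 : dist y y₀ < s * εw := lt_of_le_of_lt (le_max_right _ _) hdist
      rw [dist_eq_norm] at h1
      rwa [← norm_neg, neg_sub]
    -- the two-step chain construction on one coordinate
    have side : ∀ u₀ u : X, u₀ ∈ C → u ∈ C → ‖u₀ - u‖ < s * εw →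
        ∃ m ∈ C, hatD E d p m u₀ ≤ s ^ (1 / p) * M ∧ hatD E d p u₀ m ≤ s ^ (1 / p) * M ∧
          hatD E d p m u ≤ s ^ (1 / p) * M ∧ hatD E d p u m ≤ s ^ (1 / p) * M := by
      intro u₀ u hu₀ hu hnorm
      set m : X := (1 - s) • u₀ + s • w with hm
      have hmC : m ∈ C := hCcv hu₀ hwC (by linarith) hs0.le (by ring)
      set w' : X := w + ((1 - s) / s) • (u₀ - u) with hw'
      have hdiv0 : 0 ≤ (1 - s) / s := div_nonneg (by linarith) hs0.le
      have hw'aff : w' ∈ (affineSpan ℝ C : Set X) := by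
        have h := AffineSubspace.smul_vsub_vadd_mem (affineSpan ℝ C) ((1 - s) / s)
          (subset_affineSpan ℝ C hu₀) (subset_affineSpan ℝ C hu) (subset_affineSpan ℝ C hwC)
        simpa [hw', vsub_eq_sub, vadd_eq_add, add_comm] using h
      have hw'ball : w' ∈ Metric.ball w εw := by
        rw [Metric.mem_ball, dist_eq_norm]
        have hnn : w' - w = ((1 - s) / s) • (u₀ - u) := by rw [hw']; abel
        rw [hnn, norm_smul, Real.norm_eq_abs, abs_of_nonneg hdiv0]
        by_cases h1s : s = 1
        · simp [h1s]; linarith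
        · have hlt : 0 < (1 - s) / s := div_pos (lt_of_le_of_ne (by linarith) 
            (fun h => h1s (by linarith))) hs0
          calc ((1 - s) / s) * ‖u₀ - u‖ < ((1 - s) / s) * (s * εw) :=
                mul_lt_mul_of_pos_left hnorm hlt
            _ = (1 - s) * εw := by field_simp
            _ ≤ εw := by nlinarith
      have hw'C : w' ∈ C := hsub ⟨hw'aff, hw'ball⟩
      have hdecomp : m = (1 - s) • u + s • w' := by
        rw [hw', smul_add, smul_smul, mul_div_cancel₀ _ hs0.ne', hm, smul_sub]
        abel
      obtain ⟨μ₁, hμ₁⟩ := hrep u₀ hu₀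
      obtain ⟨μ₂, hμ₂⟩ := hrep u hu
      obtain ⟨γ₁, hγ₁⟩ := hrep w hwC
      obtain ⟨γ₂, hγ₂⟩ := hrep w' hw'C
      have k1 := keyEstimate E hEcp d hd0 hd_self hdc M hM0 hM p hp m u₀ w s hs0.le hs1
        hm μ₁ hμ₁ γ₁ hγ₁
      have k2 := keyEstimate E hEcp d hd0 hd_self hdc M hM0 hM p hp m u w' s hs0.le hs1
        hdecomp μ₂ hμ₂ γ₂ hγ₂
      exact ⟨m, hmC, k1.1, k1.2, k2.1, k2.2⟩
    obtain ⟨m₁, hm₁C, h₁a, h₁b, h₁c, h₁d⟩ := side x₀ x hx₀ hx hdx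
    obtain ⟨m₂, hm₂C, h₂a, h₂b, h₂c, h₂d⟩ := side y₀ y hy₀ hy hdy
    have hle1 : foldD C E d p x y ≤ hatD E d p x m₁ + hatD E d p m₁ x₀ + foldD C E d p x₀ y₀
        + hatD E d p y₀ m₂ + hatD E d p m₂ y :=
      foldD_chain_le C E d hd0 p hx hm₁C hx₀ hy₀ hm₂C hy
    have hle2 : foldD C E d p x₀ y₀ ≤ hatD E d p x₀ m₁ + hatD E d p m₁ x + foldD C E d p x y
        + hatD E d p y m₂ + hatD E d p m₂ y₀ :=
      foldD_chain_le C E d hd0 p hx₀ hm₁C hx hy hm₂C hy₀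
    rw [Real.dist_eq, abs_sub_lt_iff]
    constructor <;> simp only [] <;> linarith
end
end
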